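/- arXiv:2604.01143 — 4 statements merged into one kernel-verified Lean document; each statement's English description precedes it below -/
import Mathlib

section
/- The set of patterns {1324, 2314, 3214, 4213} is inversion monotone; that is, for every n ≥ 1 and every k ≥ 0, the number of permutations of length n with exactly k inversions avoiding all of 1324, 2314, 3214 and 4213 is at most the corresponding number for length n+1. -/
/-- A permutation `π` of length `n` (as a bijection of `Fin n`, position `i` has value `π i`)
contains the pattern `p` of length `m` if some subsequence of `π` is order-isomorphic to `p`. -/
def Contains {n m : ℕ} (π : Equiv.Perm (Fin n)) (p : Equiv.Perm (Fin m)) : Prop :=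
  ∃ f : Fin m → Fin n, StrictMono f ∧ ∀ a b : Fin m, π (f a) < π (f b) ↔ p a < p b

/-- `π` avoids the pattern `p`. -/
def Avoids {n m : ℕ} (π : Equiv.Perm (Fin n)) (p : Equiv.Perm (Fin m)) : Prop :=
  ¬ Contains π p

/-- The number of inversions of `π`: pairs of positions `i < j` with `π i > π j`. -/
noncomputable def invCount {n : ℕ} (π : Equiv.Perm (Fin n)) : ℕ :=
  Nat.card {ij : Fin n × Fin n // ij.1 < ij.2 ∧ π ij.2 < π ij.1}

def p1324 : Equiv.Perm (Fin 4) := ⟨![0,2,1,3], ![0,2,1,3], by decide, by decide⟩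
def p2314 : Equiv.Perm (Fin 4) := ⟨![1,2,0,3], ![2,0,1,3], by decide, by decide⟩
def p3214 : Equiv.Perm (Fin 4) := ⟨![2,1,0,3], ![2,1,0,3], by decide, by decide⟩
def p4213 : Equiv.Perm (Fin 4) := ⟨![3,1,0,2], ![2,1,3,0], by decide, by decide⟩

/-!
Each of `1324, 2314, 3214, 4213` is an entry of arbitrary relative size followed by an occurrence
of `213`, so a permutation avoids all four exactly when its entries after the first avoid `213`.
Writing a permutation of length `n + 1` as its first entry `m` followed by a copy `σ` of a
permutation of length `n` on the remaining values, its inversion number is `m + inv σ`.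
Prepending a new minimum to `σ` changes neither `inv σ` nor `213`-avoidance, and keeping `m`
gives the required injection from length `n + 1` to length `n + 2`.
-/

open Equiv Finset

section ConsPerm

variable {n : ℕ}

def consPerm (m : Fin (n + 1)) (σ : Perm (Fin n)) : Perm (Fin (n + 1)) :=
  (finSuccEquiv n).trans ((optionCongr σ).trans (finSuccEquiv' m).symm)

@[simp]
lemma consPerm_zero (m : Fin (n + 1)) (σ : Perm (Fin n)) : consPerm m σ 0 = m := by
  simp [consPerm]

@[simp]
lemma consPerm_succ (m : Fin (n + 1)) (σ : Perm (Fin n)) (i : Fin n) :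
    consPerm m σ i.succ = m.succAbove (σ i) := by
  simp [consPerm]

lemma consPerm_right_injective (m : Fin (n + 1)) : Function.Injective (consPerm m) :=
  fun σ σ' h ↦ Equiv.ext fun i ↦ m.succAbove_right_injective (by simpa using congr($h i.succ))

lemma consPerm_injective :
    Function.Injective fun x : Fin (n + 1) × Perm (Fin n) ↦ consPerm x.1 x.2 := by
  rintro ⟨m, σ⟩ ⟨m', σ'⟩ h
  obtain rfl : m = m' := by simpa using congr($h 0)
  exact congr_arg _ (consPerm_right_injective m h)

noncomputable def consPermEquiv : Fin (n + 1) × Perm (Fin n) ≃ Perm (Fin (n + 1)) :=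
  .ofBijective _ <| (Fintype.bijective_iff_injective_and_card _).2
    ⟨consPerm_injective, by simp [Fintype.card_perm, Nat.factorial_succ]⟩

@[simp]
lemma consPermEquiv_apply (x : Fin (n + 1) × Perm (Fin n)) :
    consPermEquiv x = consPerm x.1 x.2 := rfl

lemma invCount_eq_sum (π : Perm (Fin n)) :
    invCount π = ∑ i, ∑ j, if i < j ∧ π j < π i then 1 else 0 := by
  rw [invCount, Nat.card_eq_fintype_card, Fintype.card_subtype, card_filter,
    Fintype.sum_prod_type]

lemma invCount_consPerm (m : Fin (n + 1)) (σ : Perm (Fin n)) :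
    invCount (consPerm m σ) = m + invCount σ := by
  have hhead : ∑ j, (if (σ j).castSucc < m then 1 else 0) = (m : ℕ) := by
    rw [Equiv.sum_comp σ fun x ↦ if x.castSucc < m then 1 else 0, ← card_filter]
    simp only [Fin.lt_def, Fin.val_castSucc]
    rw [Fin.card_filter_val_lt]
    omega
  rw [invCount_eq_sum, invCount_eq_sum, ← hhead]
  simp only [Fin.sum_univ_succ, consPerm_zero, consPerm_succ, false_and,
    if_false, Fin.succ_pos, true_and, Fin.succAbove_lt_iff_castSucc_lt, Fin.succ_lt_succ_iff,
    Fin.succAbove_lt_succAbove_iff, Fin.not_lt_zero, zero_add]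

end ConsPerm

section Patterns

variable {n k : ℕ}

lemma contains_of_contains_consPerm_of_ne_zero {m : Fin (n + 1)} {σ : Perm (Fin n)}
    {p : Perm (Fin k)} (f : Fin k → Fin (n + 1)) (hf : StrictMono f) (hf0 : ∀ a, f a ≠ 0)
    (hfp : ∀ a b, consPerm m σ (f a) < consPerm m σ (f b) ↔ p a < p b) : Contains σ p := by
  have hsucc (a : Fin k) : f a = ((f a).pred (hf0 a)).succ := (Fin.succ_pred _ _).symm
  refine ⟨fun a ↦ (f a).pred (hf0 a), fun a b hab ↦ ?_, fun a b ↦ ?_⟩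
  · simpa [Fin.pred_lt_pred_iff] using hf hab
  · rw [← hfp, hsucc a, hsucc b, consPerm_succ, consPerm_succ, Fin.succAbove_lt_succAbove_iff]

lemma contains_of_contains_consPerm {m : Fin (n + 1)} {σ : Perm (Fin n)} {j : Fin (k + 1)}
    {q : Perm (Fin k)} (h : Contains (consPerm m σ) (consPerm j q)) : Contains σ q := by
  obtain ⟨f, hf, hfq⟩ := h
  refine contains_of_contains_consPerm_of_ne_zero (m := m) (f ∘ Fin.succ)
    (hf.comp Fin.strictMono_succ) (fun a ↦ (hf (Fin.succ_pos a)).ne_bot) fun a b ↦ ?_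
  simpa [Fin.succAbove_lt_succAbove_iff] using hfq a.succ b.succ

lemma contains_consPerm_of_contains {σ : Perm (Fin n)} {q : Perm (Fin k)} (m : Fin (n + 1))
    (h : Contains σ q) : ∃ j : Fin (k + 1), Contains (consPerm m σ) (consPerm j q) := by
  obtain ⟨g, hg, hgq⟩ := h
  classical
  -- `below` is downward closed, so it holds exactly for the pattern values less than its size `j`
  let below : Fin k → Prop := fun x ↦ (σ (g (q.symm x))).castSucc < m
  have below_of_le (x y : Fin k) (hyx : y ≤ x) (hx : below x) : below y := by
    refine lt_of_le_of_lt (Fin.castSucc_le_castSucc_iff.2 (not_lt.1 fun h ↦ ?_)) hx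
    exact (not_lt.2 hyx) (by simpa using (hgq _ _).1 h)
  let j : Fin (k + 1) := ⟨#{x | below x}, Nat.lt_succ_of_le (card_le_univ _ |>.trans (by simp))⟩
  have hj (a : Fin k) : (σ (g a)).castSucc < m ↔ (q a).castSucc < j := by
    rw [show (q a).castSucc < j ↔ (q a : ℕ) < #{x | below x} from Iff.rfl,
      Fin.lt_card_filter_univ_iff_apply_of_imp below below_of_le]
    simp [below]
  have hj' (a : Fin k) : m ≤ (σ (g a)).castSucc ↔ j ≤ (q a).castSucc := by
    simpa only [not_lt] using (hj a).not
  refine ⟨j, Fin.cons 0 (Fin.succ ∘ g), Fin.strictMono_cons.2 ⟨fun a ↦ Fin.succ_pos _,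
    Fin.strictMono_succ.comp hg⟩, fun a b ↦ ?_⟩
  cases a using Fin.cases <;> cases b using Fin.cases <;>
    simp [Fin.succAbove_lt_iff_castSucc_lt, Fin.lt_succAbove_iff_le_castSucc, hj, hj',
      Fin.succAbove_lt_succAbove_iff, hgq]

lemma avoids_consPerm_zero {σ : Perm (Fin n)} {p : Perm (Fin (k + 1))} (hσ : Avoids σ p)
    (hp : p 0 ≠ 0) : Avoids (consPerm 0 σ) p := by
  rintro ⟨f, hf, hfp⟩
  suffices hf0 : f 0 ≠ 0 from hσ <| contains_of_contains_consPerm_of_ne_zero f hf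
    (fun a ↦ ((Fin.pos_iff_ne_zero.2 hf0).trans_le (hf.monotone (Fin.zero_le a))).ne') hfp
  intro hf0
  have hb : p.symm 0 ≠ 0 := fun h ↦ hp (p.symm_apply_eq.1 h).symm
  have hfb : f (p.symm 0) ≠ 0 := hf0 ▸ hf.injective.ne hb
  have hval : consPerm 0 σ (f (p.symm 0)) ≠ 0 := by
    simpa using (consPerm 0 σ).injective.ne hfb
  have := hfp 0 (p.symm 0)
  rw [hf0, consPerm_zero, apply_symm_apply] at this
  exact Fin.not_lt_zero _ (this.1 (Fin.pos_iff_ne_zero.2 hval))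

end Patterns

def p213 : Perm (Fin 3) := ⟨![1,0,2], ![1,0,2], by decide, by decide⟩

lemma p1324_eq_consPerm : p1324 = consPerm 0 p213 := by decide
lemma p2314_eq_consPerm : p2314 = consPerm 1 p213 := by decide
lemma p3214_eq_consPerm : p3214 = consPerm 2 p213 := by decide
lemma p4213_eq_consPerm : p4213 = consPerm 3 p213 := by decide

lemma avoids_four_consPerm_iff {n : ℕ} (m : Fin (n + 1)) (σ : Perm (Fin n)) :
    (Avoids (consPerm m σ) p1324 ∧ Avoids (consPerm m σ) p2314 ∧
      Avoids (consPerm m σ) p3214 ∧ Avoids (consPerm m σ) p4213) ↔ Avoids σ p213 := by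
  rw [p1324_eq_consPerm, p2314_eq_consPerm, p3214_eq_consPerm, p4213_eq_consPerm]
  refine ⟨fun ⟨h0, h1, h2, h3⟩ h ↦ ?_, fun h ↦ ⟨?_, ?_, ?_, ?_⟩⟩
  · obtain ⟨j, hj⟩ := contains_consPerm_of_contains m h
    fin_cases j
    exacts [h0 hj, h1 hj, h2 hj, h3 hj]
  all_goals exact fun hc ↦ h (contains_of_contains_consPerm hc)

lemma card_avoiders_eq (n k : ℕ) :
    Nat.card {π : Perm (Fin (n + 1)) // invCount π = k ∧
      Avoids π p1324 ∧ Avoids π p2314 ∧ Avoids π p3214 ∧ Avoids π p4213} =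
    Nat.card {x : Fin (n + 1) × Perm (Fin n) // (x.1 : ℕ) + invCount x.2 = k ∧
      Avoids x.2 p213} :=
  Nat.card_congr <| (consPermEquiv.subtypeEquiv fun x ↦ by
    rw [consPermEquiv_apply, invCount_consPerm, avoids_four_consPerm_iff]).symm

/-- The set {1324, 2314, 3214, 4213} is inversion monotone: for every `n ≥ 1` and `k ≥ 0`,
the number of permutations of length `n` with `k` inversions avoiding all four patterns
is at most the corresponding number for length `n+1`. -/
theorem inversion_monotone_1324_2314_3214_4213 (n k : ℕ) (hn : 1 ≤ n) :
    Nat.card {π : Equiv.Perm (Fin n) // invCount π = k ∧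
      Avoids π p1324 ∧ Avoids π p2314 ∧ Avoids π p3214 ∧ Avoids π p4213} ≤
    Nat.card {π : Equiv.Perm (Fin (n + 1)) // invCount π = k ∧
      Avoids π p1324 ∧ Avoids π p2314 ∧ Avoids π p3214 ∧ Avoids π p4213} := by
  obtain ⟨n, rfl⟩ : ∃ m, n = m + 1 := ⟨n - 1, by omega⟩
  rw [card_avoiders_eq, card_avoiders_eq]
  refine Nat.card_le_card_of_injective (fun x ↦ ⟨Prod.map Fin.castSucc (consPerm 0) x.1, ?_⟩)
    fun x y h ↦ Subtype.ext <| ((Fin.castSucc_injective _).prodMap (consPerm_right_injective 0))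
      (congr_arg Subtype.val h)
  obtain ⟨⟨m, σ⟩, hk, hσ⟩ := x
  exact ⟨by simpa [invCount_consPerm] using hk, avoids_consPerm_zero hσ (by decide)⟩
end

section
/- Let B be a finite set of patterns. Then B has a limit sequence if and only if B contains a pattern p with inv(p) ≤ 1, i.e., a pattern of the form id_a ⊕ 21 ⊕ id_b for some a, b ≥ 0 or an identity pattern. -/
/-- A (possibly heterogeneous) set of patterns: permutations of arbitrary lengths. -/
abbrev PatternSet := Set ((m : ℕ) × Equiv.Perm (Fin m))

/-- `π` avoids every pattern in the set `B`. -/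
def AvoidsSet {n : ℕ} (π : Equiv.Perm (Fin n)) (B : PatternSet) : Prop :=
  ∀ p ∈ B, Avoids π p.2

/-- `av_n^k(B)`: the number of permutations of length `n` with exactly `k` inversions
avoiding the set of patterns `B`. -/
noncomputable def av (n k : ℕ) (B : PatternSet) : ℕ :=
  Nat.card {π : Equiv.Perm (Fin n) // invCount π = k ∧ AvoidsSet π B}

/-- `B` has a limit sequence: for every `k` there are `m_k` and `c_k` such that
`av_n^k(B) = c_k` for all `n ≥ m_k`. -/
def HasLimitSeq (B : PatternSet) : Prop :=
  ∀ k : ℕ, ∃ m c : ℕ, ∀ n : ℕ, m ≤ n → av n k B = c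


open scoped Classical

/-- `i` is a "non-inverted" (isolated) position of `π`. -/
def NI {n : ℕ} (π : Equiv.Perm (Fin n)) (i : Fin n) : Prop :=
  ∀ j, j < i ↔ π j < π i

lemma NI.gt {n : ℕ} {π : Equiv.Perm (Fin n)} {i : Fin n} (h : NI π i) (j : Fin n) :
    i < j ↔ π i < π j := by
  constructor
  · intro hij
    rcases lt_trichotomy (π i) (π j) with h1 | h1 | h1
    · exact h1
    · exact absurd (π.injective h1) hij.ne
    · exact absurd ((h j).2 h1) (not_lt.2 hij.le)
  · intro hij
    rcases lt_trichotomy i j with h1 | h1 | h1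
    · exact h1
    · subst h1; exact absurd hij (lt_irrefl _)
    · exact absurd ((h j).1 h1) (not_lt.2 hij.le)

lemma NI.fix {n : ℕ} {π : Equiv.Perm (Fin n)} {i : Fin n} (h : NI π i) : π i = i := by
  have himg : Finset.image π (Finset.Iio i) = Finset.Iio (π i) := by
    ext v
    simp only [Finset.mem_image, Finset.mem_Iio]
    constructor
    · rintro ⟨j, hj, rfl⟩; exact (h j).1 hj
    · intro hv
      exact ⟨π.symm v, (h _).2 (by simpa using hv), by simp⟩
  have hc := congrArg Finset.card himg
  rw [Finset.card_image_of_injective _ π.injective, Fin.card_Iio, Fin.card_Iio] at hc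
  exact Fin.ext hc.symm

lemma invCount_eq_card {n : ℕ} (π : Equiv.Perm (Fin n)) :
    invCount π = (Finset.univ.filter
      (fun ij : Fin n × Fin n => ij.1 < ij.2 ∧ π ij.2 < π ij.1)).card := by
  rw [invCount, Nat.card_eq_fintype_card, Fintype.card_subtype]

lemma not_NI_iff {n : ℕ} (π : Equiv.Perm (Fin n)) (s : Fin n) :
    ¬ NI π s ↔ ∃ ij : Fin n × Fin n, (ij.1 < ij.2 ∧ π ij.2 < π ij.1) ∧ (s = ij.1 ∨ s = ij.2) := by
  constructor
  · intro hs
    rw [NI] at hs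
    push_neg at hs
    obtain ⟨j, hj⟩ := hs
    rcases hj with ⟨hjs, hnv⟩ | ⟨hsle, hv⟩
    · have : π s < π j := hnv.lt_of_ne (fun e => hjs.ne' (π.injective e))
      exact ⟨(j, s), ⟨hjs, this⟩, Or.inr rfl⟩
    · have : s < j := hsle.lt_of_ne (by intro e; subst e; exact lt_irrefl _ hv)
      exact ⟨(s, j), ⟨this, hv⟩, Or.inl rfl⟩
  · rintro ⟨⟨i, j⟩, ⟨hij, hinv⟩, rfl | rfl⟩ hNI
    · exact absurd ((hNI.gt j).1 hij) (not_lt.2 hinv.le)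
    · exact absurd ((hNI i).1 hij) (not_lt.2 hinv.le)

lemma card_not_NI_le {n : ℕ} (π : Equiv.Perm (Fin n)) :
    (Finset.univ.filter (fun s => ¬ NI π s)).card ≤ 2 * invCount π := by
  classical
  rw [invCount_eq_card]
  set T := Finset.univ.filter (fun ij : Fin n × Fin n => ij.1 < ij.2 ∧ π ij.2 < π ij.1) with hT
  have key : ∀ s : Fin n, ∃ ij : Fin n × Fin n,
      ¬ NI π s → (ij ∈ T ∧ (s = ij.1 ∨ s = ij.2)) := by
    intro s
    by_cases h : NI π s
    · exact ⟨(s, s), fun hc => (hc h).elim⟩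
    · obtain ⟨ij, hij, hmem⟩ := (not_NI_iff π s).1 h
      exact ⟨ij, fun _ => ⟨by simp [hT, hij], hmem⟩⟩
  choose P hP using key
  refine Finset.card_le_mul_card_image_of_maps_to (f := P)
    (fun a ha => (hP a (Finset.mem_filter.1 ha).2).1) 2 ?_
  intro b _
  have hsub : ((Finset.univ.filter (fun s => ¬ NI π s)).filter (fun a => P a = b))
      ⊆ {b.1, b.2} := by
    intro a ha
    rw [Finset.mem_filter, Finset.mem_filter] at ha
    obtain ⟨⟨_, hni⟩, hPa⟩ := ha
    rcases (hP a hni).2 with h | h <;> rw [hPa] at h <;>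
      simp only [Finset.mem_insert, Finset.mem_singleton] <;> tauto
  exact (Finset.card_le_card hsub).trans (by
    refine (Finset.card_insert_le _ _).trans ?_
    simp)

lemma card_NI_ge {n : ℕ} (π : Equiv.Perm (Fin n)) :
    n - 2 * invCount π ≤ (Finset.univ.filter (fun s => NI π s)).card := by
  have h1 := card_not_NI_le π
  have h2 := Finset.card_filter_add_card_filter_not
    (s := (Finset.univ : Finset (Fin n))) (p := fun s => NI π s)
  rw [Finset.card_univ, Fintype.card_fin] at h2
  omega

lemma invCount_le_of_contains {n m : ℕ} {π : Equiv.Perm (Fin n)} {p : Equiv.Perm (Fin m)}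
    (h : Contains π p) : invCount p ≤ invCount π := by
  obtain ⟨f, hf, hiff⟩ := h
  refine Nat.card_le_card_of_injective
    (fun ab => ⟨(f ab.1.1, f ab.1.2), hf ab.2.1, (hiff _ _).2 ab.2.2⟩) ?_
  rintro ⟨⟨a, b⟩, h1⟩ ⟨⟨c, d⟩, h2⟩ he
  simp only [Subtype.mk.injEq, Prod.mk.injEq] at he ⊢
  exact ⟨hf.injective he.1, hf.injective he.2⟩

lemma invCount_adjSwap {n : ℕ} (u v : Fin n) (huv : (u:ℕ) + 1 = (v:ℕ)) :
    invCount (Equiv.swap u v) = 1 := by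
  classical
  have huvne : u ≠ v := by intro e; rw [e] at huv; omega
  have huvlt : u < v := by rw [Fin.lt_def]; omega
  rw [invCount_eq_card]
  convert Finset.card_singleton (u, v)
  ext ⟨x, y⟩
  simp only [Finset.mem_filter, Finset.mem_univ, true_and, Finset.mem_singleton, Prod.mk.injEq]
  constructor
  · rintro ⟨hxy, hswap⟩
    rw [Equiv.swap_apply_def, Equiv.swap_apply_def] at hswap
    split_ifs at hswap <;> simp only [Fin.lt_def, Fin.ext_iff] at * <;> omega
  · rintro ⟨rfl, rfl⟩
    rw [Equiv.swap_apply_left, Equiv.swap_apply_right]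
    exact ⟨huvlt, huvlt⟩

lemma classify {m : ℕ} {p : Equiv.Perm (Fin m)} (h : invCount p ≤ 1) :
    (∀ x, NI p x) ∨ ∃ c d : Fin m, (c:ℕ) + 1 = (d:ℕ) ∧ p c = d ∧ p d = c ∧
      ∀ x, x ≠ c → x ≠ d → p x = x := by
  classical
  by_cases hall : ∀ x, NI p x
  · exact Or.inl hall
  push_neg at hall
  obtain ⟨x₀, hx₀⟩ := hall
  obtain ⟨⟨c, d⟩, ⟨hcd, hinv⟩, _⟩ := (not_NI_iff p x₀).1 hx₀
  have hNIother : ∀ x, x ≠ c → x ≠ d → NI p x := by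
    intro x hxc hxd
    by_contra hx
    obtain ⟨⟨e, f⟩, ⟨hef, hinv2⟩, hxef⟩ := (not_NI_iff p x).1 hx
    have hne : (e, f) ≠ (c, d) := by
      rintro he
      rw [Prod.mk.injEq] at he
      rcases hxef with rfl | rfl
      · exact hxc he.1
      · exact hxd he.2
    have h2 : 1 < (Finset.univ.filter
        (fun ij : Fin m × Fin m => ij.1 < ij.2 ∧ p ij.2 < p ij.1)).card := by
      rw [Finset.one_lt_card]
      exact ⟨(e, f), by simp [hef, hinv2], (c, d), by simp [hcd, hinv], hne⟩
    rw [invCount_eq_card] at h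
    omega
  have hfix : ∀ x, x ≠ c → x ≠ d → p x = x := fun x h1 h2 => (hNIother x h1 h2).fix
  have hmemc : ∀ z : Fin m, z ≠ d → p z ≠ c → p z ≠ d → p z = z := by
    intro z hzd h1 h2
    by_cases hzc : z = c
    · subst hzc
      have := hfix (p z) ?_ ?_
      · exact p.injective this
      · exact h1
      · exact h2
    · exact hfix z hzc hzd
  -- p c ∈ {c, d}
  have hpc : p c = c ∨ p c = d := by
    by_contra hboth
    push_neg at hboth
    have h1 := hfix (p c) hboth.1 hboth.2
    exact hboth.1 (p.injective h1)
  have hpd : p d = c ∨ p d = d := by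
    by_contra hboth
    push_neg at hboth
    have h1 := hfix (p d) hboth.1 hboth.2
    exact hboth.2 (p.injective h1)
  have hpceq : p c = d ∧ p d = c := by
    rcases hpc with h1 | h1 <;> rcases hpd with h2 | h2
    · exact absurd (p.injective (h1.trans h2.symm)) hcd.ne
    · rw [h1, h2] at hinv; exact absurd hinv (by rw [not_lt]; exact hcd.le)
    · exact ⟨h1, h2⟩
    · exact absurd (p.injective (h1.trans h2.symm)) hcd.ne
  have hd1 : (c:ℕ) + 1 = (d:ℕ) := by
    by_contra hne
    have hcdn : (c:ℕ) < (d:ℕ) := hcd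
    have he : ((⟨(c:ℕ)+1, by omega⟩ : Fin m)) ≠ c := by
      simp [Fin.ext_iff]
    have he2 : ((⟨(c:ℕ)+1, by omega⟩ : Fin m)) ≠ d := by
      simp [Fin.ext_iff]; omega
    have hni := hNIother _ he he2
    have := (hni c).1 (by rw [Fin.lt_def]; simp)
    have hv1 : ((p c : Fin m) : ℕ) = (d : ℕ) := congrArg Fin.val hpceq.1
    have hv2 : ((p ⟨(c:ℕ)+1, by omega⟩ : Fin m) : ℕ) = (c:ℕ) + 1 :=
      congrArg Fin.val (hfix _ he he2)
    rw [Fin.lt_def] at this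
    omega
  exact Or.inr ⟨c, d, hd1, hpceq.1, hpceq.2, hfix⟩

lemma av_one_ge {B : PatternSet} (h2 : ∀ p ∈ B, 2 ≤ invCount p.2) (n : ℕ) :
    n - 1 ≤ av n 1 B := by
  classical
  have hg : ∀ i : Fin (n-1), invCount (Equiv.swap (⟨i, by omega⟩ : Fin n) ⟨i+1, by omega⟩) = 1 :=
    fun i => invCount_adjSwap _ _ rfl
  let g : Fin (n-1) → {π : Equiv.Perm (Fin n) // invCount π = 1 ∧ AvoidsSet π B} :=
    fun i => ⟨Equiv.swap ⟨i, by omega⟩ ⟨i+1, by omega⟩, hg i, by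
      intro p hp hcon
      have := invCount_le_of_contains hcon
      rw [hg i] at this
      exact absurd (h2 p hp) (by omega)⟩
  have hginj : Function.Injective g := by
    intro i j hij
    by_contra hne
    have hijv : (i : ℕ) ≠ (j : ℕ) := fun e => hne (Fin.ext e)
    have heq : Equiv.swap (⟨i, by omega⟩ : Fin n) ⟨i+1, by omega⟩ =
        Equiv.swap (⟨j, by omega⟩ : Fin n) ⟨j+1, by omega⟩ := congrArg Subtype.val hij
    rcases Nat.lt_or_ge (i : ℕ) (j : ℕ) with hlt | hge
    · have h1 : Equiv.swap (⟨i, by omega⟩ : Fin n) ⟨i+1, by omega⟩ ⟨i, by omega⟩ =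
          (⟨i+1, by omega⟩ : Fin n) := Equiv.swap_apply_left _ _
      rw [heq] at h1
      rw [Equiv.swap_apply_of_ne_of_ne (by simp [Fin.ext_iff]; omega)
        (by simp [Fin.ext_iff]; omega)] at h1
      exact absurd (congrArg Fin.val h1) (by simp)
    · have hlt : (j : ℕ) < (i : ℕ) := by omega
      have h1 : Equiv.swap (⟨j, by omega⟩ : Fin n) ⟨j+1, by omega⟩ ⟨j, by omega⟩ =
          (⟨j+1, by omega⟩ : Fin n) := Equiv.swap_apply_left _ _
      rw [← heq] at h1
      rw [Equiv.swap_apply_of_ne_of_ne (by simp [Fin.ext_iff]; omega)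
        (by simp [Fin.ext_iff]; omega)] at h1
      exact absurd (congrArg Fin.val h1) (by simp)
  calc n - 1 = Nat.card (Fin (n-1)) := by simp
  _ ≤ _ := Nat.card_le_card_of_injective g hginj

lemma forward_dir {B : PatternSet} (h : HasLimitSeq B) : ∃ p ∈ B, invCount p.2 ≤ 1 := by
  by_contra hno
  push_neg at hno
  have h2 : ∀ p ∈ B, 2 ≤ invCount p.2 := fun p hp => hno p hp
  obtain ⟨m, c, hmc⟩ := h 1
  have e1 := hmc (m + c + 2) (by omega)
  have e2 := av_one_ge h2 (m + c + 2)
  omega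

lemma keyContain {n mp : ℕ} (π : Equiv.Perm (Fin n)) {p : Equiv.Perm (Fin mp)}
    {c d : Fin mp} (hcd : (c:ℕ) + 1 = (d:ℕ)) (hpc : p c = d) (hpd : p d = c)
    (hfix : ∀ x, x ≠ c → x ≠ d → p x = x)
    {i j : Fin n} (hij : i < j) (hinv : π j < π i)
    (L R : Finset (Fin n))
    (hLcard : L.card = (c:ℕ)) (hL : ∀ s ∈ L, NI π s ∧ s < i)
    (hRcard : R.card = mp - (c:ℕ) - 2) (hR : ∀ s ∈ R, NI π s ∧ j < s) :
    Contains π p := by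
  classical
  have hdlt : (c:ℕ) + 1 < mp := by have := d.isLt; omega
  let eL := L.orderEmbOfFin hLcard
  let eR := R.orderEmbOfFin hRcard
  -- value facts
  have hLv : ∀ s ∈ L, π s < π i ∧ π s < π j := by
    intro s hs
    obtain ⟨hni, hsi⟩ := hL s hs
    exact ⟨(hni.gt i).1 hsi, (hni.gt j).1 (hsi.trans hij)⟩
  have hRv : ∀ r ∈ R, π i < π r ∧ π j < π r := by
    intro r hr
    obtain ⟨hni, hjr⟩ := hR r hr
    exact ⟨(hni i).1 (hij.trans hjr), (hni j).1 hjr⟩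
  have hLLv : ∀ s ∈ L, ∀ s' ∈ L, s < s' → π s < π s' := by
    intro s hs s' hs' hss
    exact ((hL s hs).1.gt s').1 hss
  have hRRv : ∀ r ∈ R, ∀ r' ∈ R, r < r' → π r < π r' := by
    intro r hr r' hr' hrr
    exact ((hR r hr).1.gt r').1 hrr
  have hLRv : ∀ s ∈ L, ∀ r ∈ R, s < r ∧ π s < π r := by
    intro s hs r hr
    have h1 : s < r := ((hL s hs).2.trans hij).trans (hR r hr).2
    exact ⟨h1, ((hL s hs).1.gt r).1 h1⟩
  -- the embedding
  have hidx : ∀ t : Fin mp, ¬ (t:ℕ) < (c:ℕ) → (t:ℕ) ≠ c → (t:ℕ) ≠ (c:ℕ)+1 →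
      (t:ℕ) - ((c:ℕ)+2) < mp - (c:ℕ) - 2 := by
    intro t h1 h2 h3; have := t.isLt; omega
  set f : Fin mp → Fin n := fun t =>
    if h : (t:ℕ) < (c:ℕ) then eL ⟨t, h⟩
    else if h2 : (t:ℕ) = (c:ℕ) then i
    else if h3 : (t:ℕ) = (c:ℕ)+1 then j
    else eR ⟨(t:ℕ) - ((c:ℕ)+2), hidx t h h2 h3⟩ with hfdef
  have hf1 : ∀ (t : Fin mp) (h : (t:ℕ) < (c:ℕ)), f t = eL ⟨t, h⟩ := by
    intro t h; simp only [hfdef]; rw [dif_pos h]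
  have hf2 : ∀ (t : Fin mp), (t:ℕ) = (c:ℕ) → f t = i := by
    intro t h; simp only [hfdef]; rw [dif_neg (by omega), dif_pos h]
  have hf3 : ∀ (t : Fin mp), (t:ℕ) = (c:ℕ)+1 → f t = j := by
    intro t h; simp only [hfdef]; rw [dif_neg (by omega), dif_neg (by omega), dif_pos h]
  have hf4 : ∀ (t : Fin mp) (h1 : ¬ (t:ℕ) < (c:ℕ)) (h2 : (t:ℕ) ≠ (c:ℕ)) (h3 : (t:ℕ) ≠ (c:ℕ)+1),
      f t = eR ⟨(t:ℕ) - ((c:ℕ)+2), hidx t h1 h2 h3⟩ := by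
    intro t h1 h2 h3; simp only [hfdef]; rw [dif_neg h1, dif_neg h2, dif_neg h3]
  have hmemL : ∀ (x : Fin (c:ℕ)), eL x ∈ L := fun x => Finset.orderEmbOfFin_mem L hLcard x
  have hmemR : ∀ (x : Fin (mp - (c:ℕ) - 2)), eR x ∈ R := fun x => Finset.orderEmbOfFin_mem R hRcard x
  -- category case split helper
  have hcat : ∀ t : Fin mp, (t:ℕ) < (c:ℕ) ∨ (t:ℕ) = (c:ℕ) ∨ (t:ℕ) = (c:ℕ)+1 ∨ ((c:ℕ)+2 ≤ (t:ℕ) ∧ (t:ℕ) < mp) := by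
    intro t; have := t.isLt; omega
  have hmono : StrictMono f := by
    intro a b hab
    rw [Fin.lt_def] at hab
    rcases hcat a with ha | ha | ha | ha <;> rcases hcat b with hb | hb | hb | hb
    · rw [hf1 a ha, hf1 b hb]
      exact (L.orderEmbOfFin hLcard).strictMono (by simp only [Fin.mk_lt_mk]; omega)
    · rw [hf1 a ha, hf2 b hb]; exact (hL _ (hmemL _)).2
    · rw [hf1 a ha, hf3 b hb]; exact (hL _ (hmemL _)).2.trans hij
    · rw [hf1 a ha, hf4 b (by omega) (by omega) (by omega)]
      exact (hLRv _ (hmemL _) _ (hmemR _)).1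
    · omega
    · omega
    · rw [hf2 a ha, hf3 b hb]; exact hij
    · rw [hf2 a ha, hf4 b (by omega) (by omega) (by omega)]
      exact hij.trans (hR _ (hmemR _)).2
    · omega
    · omega
    · omega
    · rw [hf3 a ha, hf4 b (by omega) (by omega) (by omega)]
      exact (hR _ (hmemR _)).2
    · omega
    · omega
    · omega
    · rw [hf4 a (by omega) (by omega) (by omega), hf4 b (by omega) (by omega) (by omega)]
      exact (R.orderEmbOfFin hRcard).strictMono (by simp only [Fin.mk_lt_mk]; omega)
  -- p values
  have hpvc : ((p c : Fin mp) : ℕ) = (c:ℕ)+1 := by rw [hpc]; omega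
  have hpvd : ∀ t : Fin mp, (t:ℕ) = (c:ℕ)+1 → ((p t : Fin mp) : ℕ) = (c:ℕ) := by
    intro t h
    have : t = d := Fin.ext (by omega)
    rw [this, hpd]
  have hpvfix : ∀ t : Fin mp, (t:ℕ) ≠ (c:ℕ) → (t:ℕ) ≠ (c:ℕ)+1 → ((p t : Fin mp) : ℕ) = (t:ℕ) := by
    intro t h1 h2
    rw [hfix t (fun e => h1 (congrArg Fin.val e)) (fun e => h2 (by rw [e]; omega))]
  have hone : ∀ a b : Fin mp, p a < p b → π (f a) < π (f b) := by
    intro a b hab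
    rw [Fin.lt_def] at hab
    have hpva : ∀ t : Fin mp, (t:ℕ) = (c:ℕ) → ((p t : Fin mp) : ℕ) = (c:ℕ)+1 := by
      intro t h
      have : t = c := Fin.ext h
      rw [this]; exact hpvc
    rcases hcat a with ha | ha | ha | ha <;> rcases hcat b with hb | hb | hb | hb
    -- a in L
    · rw [hf1 a ha, hf1 b hb]
      have h1 := hpvfix a (by omega) (by omega); have h2 := hpvfix b (by omega) (by omega)
      exact hLLv _ (hmemL _) _ (hmemL _)
        ((L.orderEmbOfFin hLcard).strictMono (by simp only [Fin.mk_lt_mk]; omega))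
    · rw [hf1 a ha, hf2 b hb]; exact (hLv _ (hmemL _)).1
    · rw [hf1 a ha, hf3 b hb]; exact (hLv _ (hmemL _)).2
    · rw [hf1 a ha, hf4 b (by omega) (by omega) (by omega)]
      exact (hLRv _ (hmemL _) _ (hmemR _)).2
    -- a = c : p a = c+1
    · have h1 := hpva a ha; have h2 := hpvfix b (by omega) (by omega); exfalso; omega
    · have h1 := hpva a ha; have h2 := hpva b hb; exfalso; omega
    · have h1 := hpva a ha; have h2 := hpvd b hb; exfalso; omega
    · rw [hf2 a ha, hf4 b (by omega) (by omega) (by omega)]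
      exact (hRv _ (hmemR _)).1
    -- a = c+1 : p a = c
    · have h1 := hpvd a ha; have h2 := hpvfix b (by omega) (by omega); exfalso; omega
    · rw [hf3 a ha, hf2 b hb]; exact hinv
    · have h1 := hpvd a ha; have h2 := hpvd b hb; exfalso; omega
    · rw [hf3 a ha, hf4 b (by omega) (by omega) (by omega)]
      exact (hRv _ (hmemR _)).2
    -- a in R
    · have h1 := hpvfix a (by omega) (by omega); have h2 := hpvfix b (by omega) (by omega)
      exfalso; omega
    · have h1 := hpvfix a (by omega) (by omega); have h2 := hpva b hb; exfalso; omega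
    · have h1 := hpvfix a (by omega) (by omega); have h2 := hpvd b hb; exfalso; omega
    · rw [hf4 a (by omega) (by omega) (by omega), hf4 b (by omega) (by omega) (by omega)]
      have h1 := hpvfix a (by omega) (by omega); have h2 := hpvfix b (by omega) (by omega)
      exact hRRv _ (hmemR _) _ (hmemR _)
        ((R.orderEmbOfFin hRcard).strictMono (by simp only [Fin.mk_lt_mk]; omega))
  refine ⟨f, hmono, fun a b => ⟨fun h => ?_, hone a b⟩⟩
  rcases lt_trichotomy (p a) (p b) with h1 | h1 | h1
  · exact h1
  · have : a = b := p.injective h1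
    subst this
    exact absurd h (lt_irrefl _)
  · exact absurd (hone b a h1) (not_lt.2 h.le)

lemma struct {n mp k : ℕ} {π : Equiv.Perm (Fin n)} {p : Equiv.Perm (Fin mp)}
    {c d : Fin mp} (hcd : (c:ℕ) + 1 = (d:ℕ)) (hpc : p c = d) (hpd : p d = c)
    (hfix : ∀ x, x ≠ c → x ≠ d → p x = x)
    (hk : invCount π = k) (hav : Avoids π p)
    (i₀ : Fin n) (hlo : mp + 2*k + 2 ≤ (i₀:ℕ)) (hhi : (i₀:ℕ) + mp + 2*k + 2 ≤ n) :
    NI π i₀ := by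
  classical
  have hcmp : (c:ℕ) + 2 ≤ mp := by have := d.isLt; omega
  by_contra hni
  obtain ⟨⟨i, j⟩, ⟨hij, hinv⟩, hcase⟩ := (not_NI_iff π i₀).1 hni
  simp only at hij hinv hcase
  -- counting facts
  have hNIcard := card_NI_ge π
  rw [hk] at hNIcard
  have hsplit : ∀ s, NI π s → s < i ∨ j < s := by
    intro s hs
    by_contra hC
    push_neg at hC
    obtain ⟨his, hsj⟩ := hC
    have hsi : s ≠ i := by
      rintro rfl
      exact absurd ((hs.gt j).1 hij) (not_lt.2 hinv.le)
    have hsj' : s ≠ j := by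
      rintro rfl
      exact absurd ((hs i).1 hij) (not_lt.2 hinv.le)
    have h1 : π i < π s := (hs i).1 (his.lt_of_ne (Ne.symm hsi))
    have h2 : π s < π j := (hs.gt j).1 (hsj.lt_of_ne hsj')
    exact absurd (h1.trans h2) (not_lt.2 hinv.le)
  set Lf := Finset.univ.filter (fun s => NI π s ∧ s < i) with hLf
  set Rf := Finset.univ.filter (fun s => NI π s ∧ j < s) with hRf
  have hLsub : ∀ s ∈ Lf, NI π s ∧ s < i := by intro s hs; rw [hLf, Finset.mem_filter] at hs; exact hs.2
  have hRsub : ∀ s ∈ Rf, NI π s ∧ j < s := by intro s hs; rw [hRf, Finset.mem_filter] at hs; exact hs.2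
  have hLle : Lf.card ≤ (i:ℕ) := by
    have : Lf ⊆ Finset.Iio i := by
      intro s hs; rw [Finset.mem_Iio]; exact (hLsub s hs).2
    have := Finset.card_le_card this
    rw [Fin.card_Iio] at this
    exact this
  have hRle : Rf.card ≤ n - 1 - (j:ℕ) := by
    have : Rf ⊆ Finset.Ioi j := by
      intro s hs; rw [Finset.mem_Ioi]; exact (hRsub s hs).2
    have h2 := Finset.card_le_card this
    have h3 : (Finset.Ioi j).card = n - 1 - (j:ℕ) := by
      rw [Fin.card_Ioi]
    omega
  have hsum : n - 2 * k ≤ Lf.card + Rf.card := by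
    have hsub : Finset.univ.filter (fun s => NI π s) ⊆ Lf ∪ Rf := by
      intro s hs
      rw [Finset.mem_filter] at hs
      rcases hsplit s hs.2 with h | h
      · exact Finset.mem_union_left _ (by rw [hLf, Finset.mem_filter]; exact ⟨hs.1, hs.2, h⟩)
      · exact Finset.mem_union_right _ (by rw [hRf, Finset.mem_filter]; exact ⟨hs.1, hs.2, h⟩)
    have := (Finset.card_le_card hsub).trans (Finset.card_union_le _ _)
    omega
  have hLge' : (i:ℕ) - 2 * k ≤ Lf.card := by
    have hsub : Finset.Iio i ⊆ Lf ∪ Finset.univ.filter (fun s => ¬ NI π s) := by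
      intro s hs
      rw [Finset.mem_Iio] at hs
      by_cases h : NI π s
      · exact Finset.mem_union_left _ (by rw [hLf, Finset.mem_filter]; exact ⟨Finset.mem_univ _, h, hs⟩)
      · exact Finset.mem_union_right _ (by rw [Finset.mem_filter]; exact ⟨Finset.mem_univ _, h⟩)
    have h1 := (Finset.card_le_card hsub).trans (Finset.card_union_le _ _)
    rw [Fin.card_Iio] at h1
    have h2 := card_not_NI_le π
    rw [hk] at h2
    omega
  have hRge' : (n - 1 - (j:ℕ)) - 2 * k ≤ Rf.card := by
    have hsub : Finset.Ioi j ⊆ Rf ∪ Finset.univ.filter (fun s => ¬ NI π s) := by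
      intro s hs
      rw [Finset.mem_Ioi] at hs
      by_cases h : NI π s
      · exact Finset.mem_union_left _ (by rw [hRf, Finset.mem_filter]; exact ⟨Finset.mem_univ _, h, hs⟩)
      · exact Finset.mem_union_right _ (by rw [Finset.mem_filter]; exact ⟨Finset.mem_univ _, h⟩)
    have h1 := (Finset.card_le_card hsub).trans (Finset.card_union_le _ _)
    have h3 : (Finset.Ioi j).card = n - 1 - (j:ℕ) := by rw [Fin.card_Ioi]
    have h2 := card_not_NI_le π
    rw [hk] at h2
    omega
  -- in both cases, Lf and Rf are large
  have hbig : (c:ℕ) ≤ Lf.card ∧ mp - (c:ℕ) - 2 ≤ Rf.card := by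
    have hjn := j.isLt
    have hin := i.isLt
    rcases hcase with rfl | rfl
    · constructor
      · omega
      · -- Rf.card ≥ n - 2k - i
        omega
    · constructor
      · omega
      · omega
  obtain ⟨L, hLsub2, hLcard⟩ := Finset.exists_subset_card_eq hbig.1
  obtain ⟨R, hRsub2, hRcard⟩ := Finset.exists_subset_card_eq hbig.2
  exact hav (keyContain π hcd hpc hpd hfix hij hinv L R hLcard
    (fun s hs => hLsub s (hLsub2 hs)) hRcard (fun s hs => hRsub s (hRsub2 hs)))

lemma contains_refl_of_inv {n mp k : ℕ} (π : Equiv.Perm (Fin n)) (hk : invCount π = k)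
    (hn : mp + 2 * k ≤ n) : Contains π (Equiv.refl (Fin mp)) := by
  classical
  have h1 := card_NI_ge π
  rw [hk] at h1
  obtain ⟨S, hSsub, hScard⟩ := Finset.exists_subset_card_eq
    (show mp ≤ (Finset.univ.filter (fun s => NI π s)).card by omega)
  have hSNI : ∀ s ∈ S, NI π s := fun s hs => (Finset.mem_filter.1 (hSsub hs)).2
  refine ⟨S.orderEmbOfFin hScard, (S.orderEmbOfFin hScard).strictMono, fun a b => ?_⟩
  simp only [Equiv.refl_apply]
  constructor
  · intro h
    by_contra hba
    rcases lt_trichotomy a b with h2 | h2 | h2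
    · exact hba h2
    · subst h2; exact absurd h (lt_irrefl _)
    · have := ((hSNI _ (Finset.orderEmbOfFin_mem S hScard b)).gt _).1
        ((S.orderEmbOfFin hScard).strictMono h2)
      exact absurd (h.trans this) (lt_irrefl _)
  · intro h
    exact ((hSNI _ (Finset.orderEmbOfFin_mem S hScard a)).gt _).1
      ((S.orderEmbOfFin hScard).strictMono h)

/-! ### Insertion of a fixed point -/

def IsIns {n : ℕ} (A : Fin (n+1)) (π : Equiv.Perm (Fin n)) (σ : Equiv.Perm (Fin (n+1))) : Prop :=
  σ A = A ∧ ∀ i : Fin n, σ (A.succAbove i) = A.succAbove (π i)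

lemma isIns_exists {n : ℕ} (A : Fin (n+1)) (π : Equiv.Perm (Fin n)) :
    IsIns A π (((finSuccEquiv' A).trans (Equiv.optionCongr π)).trans (finSuccEquiv' A).symm) := by
  constructor
  · simp [finSuccEquiv'_at, finSuccEquiv'_symm_none]
  · intro i
    simp [finSuccEquiv'_succAbove, finSuccEquiv'_symm_some]

lemma isIns_unique {n : ℕ} {A : Fin (n+1)} {π : Equiv.Perm (Fin n)}
    {σ σ' : Equiv.Perm (Fin (n+1))} (h : IsIns A π σ) (h' : IsIns A π σ') : σ = σ' := by
  ext x
  by_cases hx : x = A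
  · subst hx; rw [h.1, h'.1]
  · obtain ⟨u, rfl⟩ := Fin.exists_succAbove_eq hx
    rw [h.2, h'.2]

lemma isIns_of_fixed {n : ℕ} {A : Fin (n+1)} {σ : Equiv.Perm (Fin (n+1))} (hA : σ A = A) :
    ∃ π : Equiv.Perm (Fin n), IsIns A π σ := by
  set τ := ((finSuccEquiv' A).symm.trans σ).trans (finSuccEquiv' A) with hτ
  have hτnone : τ none = none := by
    simp [hτ, finSuccEquiv'_symm_none, hA, finSuccEquiv'_at]
  refine ⟨Equiv.removeNone τ, hA, fun i => ?_⟩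
  have hne : σ (A.succAbove i) ≠ A := by
    intro e
    exact Fin.succAbove_ne A i (σ.injective (e.trans hA.symm))
  have hsome : ∃ x', τ (some i) = some x' := by
    rcases h : τ (some i) with _ | x'
    · exfalso
      rw [hτ] at h
      simp only [Equiv.trans_apply, finSuccEquiv'_symm_some] at h
      have := (finSuccEquiv' A).injective (h.trans (finSuccEquiv'_at A).symm)
      exact hne this
    · exact ⟨x', rfl⟩
  have h1 := Equiv.removeNone_some τ hsome
  rw [hτ] at h1
  simp only [Equiv.trans_apply, finSuccEquiv'_symm_some] at h1
  have := congrArg (finSuccEquiv' A).symm h1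
  rw [Equiv.symm_apply_apply, finSuccEquiv'_symm_some] at this
  exact this.symm

lemma coe_succAbove {n : ℕ} (A : Fin (n+1)) (u : Fin n) :
    ((A.succAbove u : Fin (n+1)) : ℕ) = if (u:ℕ) < (A:ℕ) then (u:ℕ) else (u:ℕ) + 1 := by
  by_cases h : (u:ℕ) < (A:ℕ)
  · rw [if_pos h, Fin.succAbove_of_castSucc_lt _ _ (by rwa [Fin.lt_def, Fin.coe_castSucc])]
    rfl
  · rw [if_neg h, Fin.succAbove_of_le_castSucc _ _ (by rw [Fin.le_def, Fin.coe_castSucc]; omega)]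
    rfl

lemma cut_of_NI {n : ℕ} {π : Equiv.Perm (Fin n)} {A : ℕ} (hAn : A < n)
    (hNA : NI π ⟨A, hAn⟩) (u : Fin n) : (u:ℕ) < A ↔ ((π u : Fin n) : ℕ) < A := by
  have h1 := hNA u
  rw [hNA.fix] at h1
  rw [Fin.lt_def, Fin.lt_def] at h1
  exact h1

lemma invCount_isIns {n : ℕ} {A : Fin (n+1)} {π : Equiv.Perm (Fin n)}
    {σ : Equiv.Perm (Fin (n+1))} (h : IsIns A π σ)
    (hcut : ∀ u : Fin n, (u:ℕ) < (A:ℕ) ↔ ((π u : Fin n) : ℕ) < (A:ℕ)) :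
    invCount σ = invCount π := by
  rw [invCount, invCount]
  have key : ∀ u v : Fin n, (A.succAbove u < A.succAbove v ∧ σ (A.succAbove v) < σ (A.succAbove u))
      ↔ (u < v ∧ π v < π u) := by
    intro u v
    rw [h.2, h.2, (Fin.strictMono_succAbove A).lt_iff_lt, (Fin.strictMono_succAbove A).lt_iff_lt]
  refine (Nat.card_eq_of_bijective
    (fun uv => ⟨(A.succAbove uv.1.1, A.succAbove uv.1.2), (key _ _).2 uv.2⟩) ⟨?_, ?_⟩).symm
  · rintro ⟨⟨a, b⟩, h1⟩ ⟨⟨a', b'⟩, h2⟩ he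
    simp only [Subtype.mk.injEq, Prod.mk.injEq] at he ⊢
    exact ⟨(Fin.strictMono_succAbove A).injective he.1,
      (Fin.strictMono_succAbove A).injective he.2⟩
  · rintro ⟨⟨x, y⟩, hxy, hvu⟩
    simp only at hxy hvu
    have hAA : σ A = A := h.1
    have hxA : x ≠ A := by
      intro hxe
      have hyA : y ≠ A := by intro hye; rw [hxe, hye] at hxy; exact lt_irrefl _ hxy
      obtain ⟨v, hv⟩ := Fin.exists_succAbove_eq hyA
      have hyc : (A:ℕ) < (y:ℕ) := by rw [hxe] at hxy; exact hxy
      have hvc : ¬ ((v:ℕ) < (A:ℕ)) := by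
        intro hc
        have := coe_succAbove A v
        rw [if_pos hc, hv] at this
        omega
      have hpc := (not_iff_not.2 (hcut v)).1 hvc
      have hσy : σ y = A.succAbove (π v) := by rw [← hv, h.2]
      have hσyc := coe_succAbove A (π v)
      rw [← hσy] at hσyc
      have hvu2 : (σ y : ℕ) < (A:ℕ) := by
        have : σ y < σ A := by rw [hxe] at hvu; exact hvu
        rw [hAA] at this
        exact this
      by_cases hq : ((π v : Fin n):ℕ) < (A:ℕ) <;> simp [hq] at hσyc <;> omega
    have hyA : y ≠ A := by
      intro hye
      obtain ⟨u, hu⟩ := Fin.exists_succAbove_eq hxA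
      have hxc : (x:ℕ) < (A:ℕ) := by rw [hye] at hxy; exact hxy
      have huc : (u:ℕ) < (A:ℕ) := by
        have := coe_succAbove A u
        rw [hu] at this
        by_cases hq : (u:ℕ) < (A:ℕ)
        · exact hq
        · rw [if_neg hq] at this; omega
      have hpc := (hcut u).1 huc
      have hσx : σ x = A.succAbove (π u) := by rw [← hu, h.2]
      have hσxc := coe_succAbove A (π u)
      rw [← hσx] at hσxc
      rw [if_pos hpc] at hσxc
      have hvu2 : (A:ℕ) < (σ x : ℕ) := by
        have : σ y < σ x := hvu
        rw [hye, hAA] at this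
        exact this
      omega
    obtain ⟨u, hu⟩ := Fin.exists_succAbove_eq hxA
    obtain ⟨v, hv⟩ := Fin.exists_succAbove_eq hyA
    have hprop : u < v ∧ π v < π u := by
      rw [← (key u v)]
      rw [hu, hv]
      exact ⟨hxy, hvu⟩
    exact ⟨⟨(u, v), hprop⟩, Subtype.ext (Prod.ext hu hv)⟩

lemma NI_isIns_base {n : ℕ} {A : Fin (n+1)} {π : Equiv.Perm (Fin n)}
    {σ : Equiv.Perm (Fin (n+1))} (h : IsIns A π σ)
    (hcut : ∀ u : Fin n, (u:ℕ) < (A:ℕ) ↔ ((π u : Fin n) : ℕ) < (A:ℕ)) :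
    NI σ A := by
  intro y
  rw [h.1]
  by_cases hy : y = A
  · rw [hy, h.1]
  · obtain ⟨u, rfl⟩ := Fin.exists_succAbove_eq hy
    rw [h.2]
    have h1 := coe_succAbove A u
    have h2 := coe_succAbove A (π u)
    have h3 := hcut u
    rw [Fin.lt_def, Fin.lt_def]
    by_cases hq : (u:ℕ) < (A:ℕ)
    · rw [if_pos hq] at h1
      rw [if_pos (h3.1 hq)] at h2
      constructor <;> intro <;> omega
    · rw [if_neg hq] at h1
      rw [if_neg ((not_iff_not.2 h3).1 hq)] at h2
      constructor <;> intro <;> omega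

lemma NI_isIns_succAbove {n : ℕ} {A : Fin (n+1)} {π : Equiv.Perm (Fin n)}
    {σ : Equiv.Perm (Fin (n+1))} (h : IsIns A π σ)
    (hcut : ∀ u : Fin n, (u:ℕ) < (A:ℕ) ↔ ((π u : Fin n) : ℕ) < (A:ℕ))
    {i : Fin n} (hi : NI π i) : NI σ (A.succAbove i) := by
  intro y
  rw [h.2]
  by_cases hy : y = A
  · rw [hy, h.1]
    have h1 := coe_succAbove A i
    have h2 := coe_succAbove A (π i)
    have h3 := hcut i
    rw [Fin.lt_def, Fin.lt_def]
    by_cases hq : (i:ℕ) < (A:ℕ)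
    · rw [if_pos hq] at h1; rw [if_pos (h3.1 hq)] at h2
      constructor <;> intro <;> omega
    · rw [if_neg hq] at h1; rw [if_neg ((not_iff_not.2 h3).1 hq)] at h2
      constructor <;> intro <;> omega
  · obtain ⟨u, rfl⟩ := Fin.exists_succAbove_eq hy
    rw [h.2, (Fin.strictMono_succAbove A).lt_iff_lt, (Fin.strictMono_succAbove A).lt_iff_lt]
    exact hi u

lemma contains_of_isIns_easy {n mq : ℕ} {A : Fin (n+1)} {π : Equiv.Perm (Fin n)}
    {σ : Equiv.Perm (Fin (n+1))} (h : IsIns A π σ) {q : Equiv.Perm (Fin mq)}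
    (hcon : Contains π q) : Contains σ q := by
  obtain ⟨f, hf, hiff⟩ := hcon
  refine ⟨fun t => A.succAbove (f t), fun a b hab => (Fin.strictMono_succAbove A) (hf hab),
    fun a b => ?_⟩
  rw [h.2, h.2, (Fin.strictMono_succAbove A).lt_iff_lt]
  exact hiff a b

lemma contains_of_isIns {n : ℕ} {A : Fin (n+1)} {π : Equiv.Perm (Fin n)}
    {σ : Equiv.Perm (Fin (n+1))} (h : IsIns A π σ) {w mq : ℕ} (hw1 : 1 ≤ w)
    (hwin : ∀ x : Fin (n+1), (A:ℕ) ≤ (x:ℕ) → (x:ℕ) < (A:ℕ) + w → NI σ x)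
    (hAw : (A:ℕ) + w ≤ n + 1) {q : Equiv.Perm (Fin mq)} (hmq : mq + 1 ≤ w)
    (hcon : Contains σ q) : Contains π q := by
  classical
  obtain ⟨f, hf, hiff⟩ := hcon
  have hNIA : NI σ A := hwin A (le_refl _) (by omega)
  have hσA : σ A = A := hNIA.fix
  have hfixwin : ∀ x : Fin (n+1), (A:ℕ) ≤ (x:ℕ) → (x:ℕ) < (A:ℕ) + w → σ x = x :=
    fun x h1 h2 => (hwin x h1 h2).fix
  have hvL : ∀ x : Fin (n+1), (x:ℕ) < (A:ℕ) → (σ x : ℕ) < (A:ℕ) := by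
    intro x hx
    have h1 := (hNIA x).1 (by rwa [Fin.lt_def])
    rw [hσA, Fin.lt_def] at h1
    exact h1
  have hvR : ∀ x : Fin (n+1), (A:ℕ) + w ≤ (x:ℕ) → (A:ℕ) + w ≤ (σ x : ℕ) := by
    intro x hx
    have hNIz := hwin ⟨(A:ℕ)+w-1, by omega⟩ (by simp; omega) (by simp; omega)
    have h2 := (hNIz.gt x).1 (by rw [Fin.lt_def]; simp; omega)
    rw [hNIz.fix, Fin.lt_def] at h2
    simp at h2
    omega
  set idx : Fin mq → ℕ :=
    fun t => (Finset.univ.filter (fun s => s < t ∧ (A:ℕ) ≤ (f s : ℕ))).card with hidx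
  have hidxle : ∀ t, idx t ≤ (t:ℕ) := by
    intro t
    calc idx t ≤ (Finset.Iio t).card := Finset.card_le_card (by
            intro s hs
            rw [Finset.mem_filter] at hs
            rw [Finset.mem_Iio]
            exact hs.2.1)
    _ = t := Fin.card_Iio t
  have hidxmono : ∀ s t : Fin mq, s < t → (A:ℕ) ≤ (f s : ℕ) → idx s < idx t := by
    intro s t hst hAs
    apply Finset.card_lt_card
    constructor
    · intro x hx
      rw [Finset.mem_filter] at *
      exact ⟨hx.1, hx.2.1.trans hst, hx.2.2⟩
    · intro hsub
      have h1 : s ∈ Finset.univ.filter (fun x => x < t ∧ (A:ℕ) ≤ (f x : ℕ)) := by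
        rw [Finset.mem_filter]; exact ⟨Finset.mem_univ _, hst, hAs⟩
      have h2 := hsub h1
      rw [Finset.mem_filter] at h2
      exact lt_irrefl _ h2.2.1
  have hmq1 : ∀ t : Fin mq, (t:ℕ) < mq := fun t => t.isLt
  have hbnd : ∀ t : Fin mq, (A:ℕ)+1+idx t < n+1 := by
    intro t
    have h1 := hidxle t
    have h2 := hmq1 t
    omega
  set f' : Fin mq → Fin (n+1) := fun t =>
    if (f t:ℕ) < (A:ℕ) then f t
    else if (f t:ℕ) < (A:ℕ)+w then ⟨(A:ℕ)+1+idx t, hbnd t⟩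
    else f t with hf'
  have hf'L : ∀ t, (f t:ℕ) < (A:ℕ) → f' t = f t := by
    intro t ht; simp only [hf']; rw [if_pos ht]
  have hf'M : ∀ t, ¬ (f t:ℕ) < (A:ℕ) → (f t:ℕ) < (A:ℕ)+w →
      f' t = ⟨(A:ℕ)+1+idx t, hbnd t⟩ := by
    intro t h1 h2; simp only [hf']; rw [if_neg h1, if_pos h2]
  have hf'R : ∀ t, ¬ (f t:ℕ) < (A:ℕ)+w → f' t = f t := by
    intro t h1; simp only [hf']; rw [if_neg (by omega), if_neg h1]
  have hcat : ∀ t : Fin mq, (f t:ℕ) < (A:ℕ) ∨ ((A:ℕ) ≤ (f t:ℕ) ∧ (f t:ℕ) < (A:ℕ)+w) ∨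
      (A:ℕ)+w ≤ (f t:ℕ) := by intro t; omega
  -- values of σ ∘ f' and σ ∘ f by category
  have hvM : ∀ t, (A:ℕ) ≤ (f t:ℕ) → (f t:ℕ) < (A:ℕ)+w → (σ (f t) : ℕ) = (f t : ℕ) := by
    intro t h1 h2
    rw [hfixwin (f t) h1 h2]
  have hv'M : ∀ t, ¬ (f t:ℕ) < (A:ℕ) → (f t:ℕ) < (A:ℕ)+w →
      (σ (f' t) : ℕ) = (A:ℕ)+1+idx t := by
    intro t h1 h2
    rw [hf'M t h1 h2]
    have hb := hidxle t
    have hc := hmq1 t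
    rw [hfixwin _ (by simp; omega) (by simp; omega)]
  -- comparison transfer
  have hcomp : ∀ a b : Fin mq, (σ (f' a) < σ (f' b)) ↔ (σ (f a) < σ (f b)) := by
    intro a b
    rcases eq_or_ne a b with rfl | hab
    · simp
    rw [Fin.lt_def, Fin.lt_def]
    rcases hcat a with ha | ha | ha <;> rcases hcat b with hb | hb | hb
    · rw [hf'L a ha, hf'L b hb]
    · rw [hf'L a ha, hv'M b (by omega) hb.2]
      have h1 := hvL (f a) ha
      have h2 := hvM b hb.1 hb.2
      constructor <;> intro <;> omega
    · rw [hf'L a ha, hf'R b (by omega)]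
    · rw [hv'M a (by omega) ha.2, hf'L b hb]
      have h1 := hvL (f b) hb
      have h2 := hvM a ha.1 ha.2
      constructor <;> intro <;> omega
    · rw [hv'M a (by omega) ha.2, hv'M b (by omega) hb.2]
      have h2a := hvM a ha.1 ha.2
      have h2b := hvM b hb.1 hb.2
      rcases lt_or_gt_of_ne hab with hl | hl
      · have h5 := hidxmono a b hl ha.1
        have h6 : (f a:ℕ) < (f b:ℕ) := hf hl
        constructor <;> intro <;> omega
      · have h5 := hidxmono b a hl hb.1
        have h6 : (f b:ℕ) < (f a:ℕ) := hf hl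
        constructor <;> intro <;> omega
    · rw [hv'M a (by omega) ha.2, hf'R b (by omega)]
      have h1 := hvR (f b) (by omega)
      have h2 := hvM a ha.1 ha.2
      have h3 := hidxle a
      have h4 := hmq1 a
      constructor <;> intro <;> omega
    · rw [hf'R a (by omega), hf'L b hb]
    · rw [hf'R a (by omega), hv'M b (by omega) hb.2]
      have h1 := hvR (f a) (by omega)
      have h2 := hvM b hb.1 hb.2
      have h3 := hidxle b
      have h4 := hmq1 b
      constructor <;> intro <;> omega
    · rw [hf'R a (by omega), hf'R b (by omega)]
  have hf'mono : StrictMono f' := by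
    intro a b hab
    have hfab : (f a:ℕ) < (f b:ℕ) := hf hab
    rw [Fin.lt_def]
    rcases hcat a with ha | ha | ha <;> rcases hcat b with hb | hb | hb
    · rw [hf'L a ha, hf'L b hb]; exact hfab
    · rw [hf'L a ha, hf'M b (by omega) hb.2]
      show (f a : ℕ) < (A:ℕ)+1+idx b
      omega
    · rw [hf'L a ha, hf'R b (by omega)]; exact hfab
    · omega
    · rw [hf'M a (by omega) ha.2, hf'M b (by omega) hb.2]
      show (A:ℕ)+1+idx a < (A:ℕ)+1+idx b
      have := hidxmono a b hab ha.1
      omega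
    · rw [hf'M a (by omega) ha.2, hf'R b (by omega)]
      show (A:ℕ)+1+idx a < (f b : ℕ)
      have := hidxle a
      have := hmq1 a
      omega
    · omega
    · omega
    · rw [hf'R a (by omega), hf'R b (by omega)]; exact hfab
  have hne : ∀ t, f' t ≠ A := by
    intro t he
    have hc : (f' t:ℕ) = (A:ℕ) := congrArg Fin.val he
    rcases hcat t with h1 | h1 | h1
    · rw [hf'L t h1] at hc; omega
    · rw [hf'M t (by omega) h1.2] at hc
      have : (A:ℕ)+1+idx t = (A:ℕ) := hc
      omega
    · rw [hf'R t (by omega)] at hc; omega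
  choose g hg using fun t => Fin.exists_succAbove_eq (hne t)
  refine ⟨g, ?_, ?_⟩
  · intro a b hab
    have h1 := hf'mono hab
    rw [← hg a, ← hg b] at h1
    exact (Fin.strictMono_succAbove A).lt_iff_lt.1 h1
  · intro a b
    constructor
    · intro hlt
      apply (hiff a b).1
      apply (hcomp a b).1
      rw [← hg a, ← hg b, h.2, h.2]
      exact (Fin.strictMono_succAbove A) hlt
    · intro hlt
      have h3 := (hcomp a b).2 ((hiff a b).2 hlt)
      rw [← hg a, ← hg b, h.2, h.2] at h3
      exact (Fin.strictMono_succAbove A).lt_iff_lt.1 h3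

lemma cut_of_isIns {n : ℕ} {A : Fin (n+1)} {π : Equiv.Perm (Fin n)}
    {σ : Equiv.Perm (Fin (n+1))} (h : IsIns A π σ) (hNA : NI σ A) (u : Fin n) :
    (u:ℕ) < (A:ℕ) ↔ ((π u : Fin n) : ℕ) < (A:ℕ) := by
  have h1 := hNA (A.succAbove u)
  rw [hNA.fix, h.2] at h1
  rw [Fin.lt_def, Fin.lt_def] at h1
  have h2 := coe_succAbove A u
  have h3 := coe_succAbove A (π u)
  by_cases hq : (u:ℕ) < (A:ℕ) <;> by_cases hq2 : ((π u : Fin n):ℕ) < (A:ℕ) <;>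
    simp only [if_pos, if_neg, hq, hq2, if_true, if_false] at h2 h3 <;>
    first
    | (exact iff_of_true hq hq2)
    | (exact iff_of_false hq hq2)
    | omega

lemma av_step {B : PatternSet} {mp k M : ℕ} {p : Equiv.Perm (Fin mp)}
    {c d : Fin mp} (hcd : (c:ℕ) + 1 = (d:ℕ)) (hpc : p c = d) (hpd : p d = c)
    (hfix : ∀ x, x ≠ c → x ≠ d → p x = x)
    (hpB : (⟨mp, p⟩ : (m : ℕ) × Equiv.Perm (Fin m)) ∈ B)
    (hMle : ∀ q ∈ B, q.1 ≤ M) (n : ℕ)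
    (hn : (mp + 2*k + 2) + (M + 2) + (mp + 2*k + 2) ≤ n) :
    av (n+1) k B = av n k B := by
  classical
  set A : ℕ := mp + 2*k + 2 with hA
  set w : ℕ := M + 2 with hw
  have hAn : A < n := by omega
  have hAwn : A + w + A ≤ n := by omega
  set A' : Fin (n+1) := ⟨A, by omega⟩ with hA'
  have hA'c : (A' : ℕ) = A := rfl
  set ins : Equiv.Perm (Fin n) → Equiv.Perm (Fin (n+1)) := fun π =>
    ((finSuccEquiv' A').trans (Equiv.optionCongr π)).trans (finSuccEquiv' A').symm with hins
  have hinsIns : ∀ π, IsIns A' π (ins π) := fun π => isIns_exists A' π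
  -- window for any avoider of length n
  have hwinπ : ∀ π : Equiv.Perm (Fin n), invCount π = k → AvoidsSet π B →
      ∀ i : Fin n, A ≤ (i:ℕ) → (i:ℕ) < A + w + 1 → NI π i := by
    intro π hk hav i h1 h2
    exact struct hcd hpc hpd hfix hk (hav ⟨mp, p⟩ hpB) i (by omega) (by omega)
  -- window for any avoider of length n+1
  have hwinσ : ∀ σ : Equiv.Perm (Fin (n+1)), invCount σ = k → AvoidsSet σ B →
      ∀ x : Fin (n+1), A ≤ (x:ℕ) → (x:ℕ) < A + w + 1 → NI σ x := by
    intro σ hk hav x h1 h2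
    exact struct hcd hpc hpd hfix hk (hav ⟨mp, p⟩ hpB) x (by omega) (by omega)
  have hmem : ∀ x : {π : Equiv.Perm (Fin n) // invCount π = k ∧ AvoidsSet π B},
      invCount (ins x.1) = k ∧ AvoidsSet (ins x.1) B := by
    intro x
    obtain ⟨π, hπk, hπav⟩ := x
    have hwin := hwinπ π hπk hπav
    have hNIA : NI π ⟨A, hAn⟩ := hwin ⟨A, hAn⟩ (le_refl _) (by simp)
    have hcut : ∀ u : Fin n, (u:ℕ) < (A':ℕ) ↔ ((π u : Fin n) : ℕ) < (A':ℕ) :=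
      fun u => cut_of_NI hAn hNIA u
    have hIns := hinsIns π
    -- window for ins π
    have hσwin : ∀ x : Fin (n+1), (A':ℕ) ≤ (x:ℕ) → (x:ℕ) < (A':ℕ) + (w+1) → NI (ins π) x := by
      intro y hy1 hy2
      rw [hA'c] at hy1 hy2
      by_cases hyA : y = A'
      · rw [hyA]
        exact NI_isIns_base hIns hcut
      · obtain ⟨u, hu⟩ := Fin.exists_succAbove_eq hyA
        have hcoe := coe_succAbove A' u
        rw [hu] at hcoe
        have hyu : (y:ℕ) = (u:ℕ) + 1 := by
          by_cases hq : (u:ℕ) < (A':ℕ)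
          · rw [if_pos hq] at hcoe
            exfalso
            have : (y:ℕ) ≠ A := fun e => hyA (Fin.ext e)
            rw [hA'c] at hq
            omega
          · rw [if_neg hq] at hcoe; exact hcoe
        have hNIu : NI π u := by
          apply hwin u ?_ ?_
          · by_cases hq : (u:ℕ) < (A':ℕ)
            · exfalso
              have : (y:ℕ) ≠ A := fun e => hyA (Fin.ext e)
              rw [if_pos hq] at hcoe
              rw [hA'c] at hq
              omega
            · rw [hA'c] at hq; omega
          · omega
        rw [← hu]
        exact NI_isIns_succAbove hIns hcut hNIu
    constructor
    · rw [invCount_isIns hIns hcut]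
      exact hπk
    · intro q hq hcon
      refine hπav q hq (contains_of_isIns hIns (w := w+1) (by omega) ?_ (by rw [hA'c]; omega)
        (by have := hMle q hq; omega) hcon)
      exact hσwin
  rw [av, av]
  refine (Nat.card_eq_of_bijective (fun x => ⟨ins x.1, hmem x⟩) ⟨?_, ?_⟩).symm
  · -- injectivity
    rintro ⟨π1, h1⟩ ⟨π2, h2⟩ he
    rw [Subtype.mk.injEq] at he
    refine Subtype.ext ?_
    simp only
    ext i
    have e1 := (hinsIns π1).2 i
    have e2 := (hinsIns π2).2 i
    rw [he] at e1
    rw [e2] at e1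
    exact congrArg Fin.val ((Fin.strictMono_succAbove A').injective e1.symm)
  · -- surjectivity
    rintro ⟨σ, hσk, hσav⟩
    have hwin := hwinσ σ hσk hσav
    have hNAσ : NI σ A' := hwin A' (by rw [hA'c]) (by rw [hA'c]; omega)
    obtain ⟨π, hIns⟩ := isIns_of_fixed (n := n) hNAσ.fix
    have hcut := cut_of_isIns hIns hNAσ
    have hπk : invCount π = k := by rw [← invCount_isIns hIns hcut]; exact hσk
    have hπav : AvoidsSet π B := fun q hq hcon =>
      hσav q hq (contains_of_isIns_easy hIns hcon)
    refine ⟨⟨π, hπk, hπav⟩, Subtype.ext ?_⟩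
    simp only
    exact isIns_unique (hinsIns π) hIns

lemma backward_dir {B : PatternSet} (hB : B.Finite) {p₀ : (m : ℕ) × Equiv.Perm (Fin m)}
    (hp₀ : p₀ ∈ B) (hp1 : invCount p₀.2 ≤ 1) : HasLimitSeq B := by
  classical
  obtain ⟨mp, p⟩ := p₀
  intro k
  rcases classify (p := p) hp1 with hall | ⟨c, d, hcd, hpc, hpd, hfix⟩
  · refine ⟨mp + 2*k, 0, fun n hn => ?_⟩
    have hrefl : p = Equiv.refl (Fin mp) := Equiv.ext fun x => (hall x).fix
    have hemp : IsEmpty {π : Equiv.Perm (Fin n) // invCount π = k ∧ AvoidsSet π B} := by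
      refine ⟨fun x => ?_⟩
      obtain ⟨π, hπk, hπav⟩ := x
      refine hπav ⟨mp, p⟩ hp₀ ?_
      show Contains π p
      rw [hrefl]
      exact contains_refl_of_inv π hπk (by omega)
    rw [av]
    exact Nat.card_of_isEmpty
  · set M := hB.toFinset.sup (fun q => q.1) with hM
    have hMle : ∀ q ∈ B, q.1 ≤ M := fun q hq => Finset.le_sup ((Set.Finite.mem_toFinset hB).2 hq)
    set N := (mp + 2*k + 2) + (M + 2) + (mp + 2*k + 2) with hN
    refine ⟨N, av N k B, fun n hn => ?_⟩
    induction n, hn using Nat.le_induction with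
    | base => rfl
    | succ n hn ih => rw [← ih]; exact av_step hcd hpc hpd hfix hp₀ hMle n hn

/-- A finite set `B` of patterns has a limit sequence if and only if `B` contains a
pattern `p` with `inv(p) ≤ 1`. -/
theorem hasLimitSeq_iff (B : PatternSet) (hB : B.Finite) :
    HasLimitSeq B ↔ ∃ p ∈ B, invCount p.2 ≤ 1 := by
  constructor
  · exact forward_dir
  · rintro ⟨p, hp, h1⟩
    exact backward_dir hB hp h1
end

section
/- For all integers a, b ≥ 0, every k ≥ 1 and every n ≥ k + a + b, there is no permutation of length n with exactly k inversions that avoids both of the patterns id_a ⊕ 21 and 21 ⊕ id_b; that is, av_n^k({id_a ⊕ 21, 21 ⊕ id_b}) = 0. -/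
/-- The pattern `id_a ⊕ 21` of length `a + 2`: in one-line notation
`1 2 … a (a+2) (a+1)`, i.e. the transposition of the two largest values. -/
def idOplus21 (a : ℕ) : Equiv.Perm (Fin (a + 2)) :=
  Equiv.swap ⟨a, by omega⟩ ⟨a + 1, by omega⟩

/-- The pattern `21 ⊕ id_b` of length `b + 2`: in one-line notation
`2 1 3 4 … (b+2)`, i.e. the transposition of the two smallest values. -/
def p21OplusId (b : ℕ) : Equiv.Perm (Fin (b + 2)) :=
  Equiv.swap ⟨0, by omega⟩ ⟨1, by omega⟩

open Finset

def inversions {n : ℕ} (π : Equiv.Perm (Fin n)) (S : Finset (Fin n)) : Finset (Fin n × Fin n) :=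
  (S ×ˢ S).filter fun p => p.1 < p.2 ∧ π p.2 < π p.1

section Inversions

variable {n : ℕ} (π : Equiv.Perm (Fin n))

lemma invCount_eq_card_inversions : invCount π = #(inversions π univ) := by
  rw [invCount, Nat.card_eq_fintype_card, Fintype.card_subtype, inversions, univ_product_univ]

lemma inversions_mono {S T : Finset (Fin n)} (h : S ⊆ T) : inversions π S ⊆ inversions π T :=
  filter_subset_filter _ (product_subset_product h h)

lemma inversions_inter (S T : Finset (Fin n)) :
    inversions π (S ∩ T) = inversions π S ∩ inversions π T := by
  ext p
  simp only [inversions, mem_filter, mem_product, mem_inter]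
  tauto

lemma card_inversions_add_card_inversions_le (S T : Finset (Fin n)) :
    #(inversions π S) + #(inversions π T) ≤
      #(inversions π (S ∪ T)) + #(inversions π (S ∩ T)) := by
  rw [← card_union_add_card_inter, inversions_inter]
  gcongr
  exact union_subset (inversions_mono π subset_union_left) (inversions_mono π subset_union_right)

lemma inversions_pair_subset {i j : Fin n} (hij : i < j) :
    inversions π {i, j} ⊆ {(i, j)} := by
  rintro ⟨s, t⟩
  simp only [inversions, mem_filter, mem_product, mem_insert, mem_singleton, Prod.mk.injEq]
  rintro ⟨⟨rfl | rfl, rfl | rfl⟩, hst, -⟩ <;>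
    first | exact ⟨rfl, rfl⟩ | exact absurd hst (by order)

lemma exists_strictMonoOn_subset_card_le (S : Finset (Fin n)) :
    ∃ T ⊆ S, StrictMonoOn π T ∧ #S ≤ #(inversions π S) + #T := by
  have hpartner : ∀ t ∈ S.filter (fun t => ¬ ∀ s ∈ S, s < t → π s < π t),
      ∃ s ∈ S, s < t ∧ π t < π s := by
    intro t ht
    simp only [mem_filter, not_forall, not_lt] at ht
    obtain ⟨-, s, hs, hst, hle⟩ := ht
    exact ⟨s, hs, hst, hle.lt_of_ne (π.injective.ne hst.ne')⟩
  choose! partner hpartnerS hpartner_lt hpartner_inv using hpartner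
  refine ⟨S.filter fun t => ∀ s ∈ S, s < t → π s < π t, filter_subset _ _,
    fun s hs t ht hst => (mem_filter.1 ht).2 s (mem_filter.1 hs).1 hst, ?_⟩
  have hnon :
      #(S.filter fun t => ¬ ∀ s ∈ S, s < t → π s < π t) ≤ #(inversions π S) := by
    refine card_le_card_of_injOn (fun t => (partner t, t)) (fun t ht => ?_)
      (fun t _ u _ h => congrArg Prod.snd h)
    simp only [inversions, coe_filter, Set.mem_ofPred_eq, mem_product]
    exact ⟨⟨hpartnerS t ht, (mem_filter.1 ht).1⟩, hpartner_lt t ht, hpartner_inv t ht⟩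
  rw [← card_filter_add_card_filter_not (s := S) fun t => ∀ s ∈ S, s < t → π s < π t]
  omega

end Inversions

lemma card_filter_lt_orderEmbOfFin {α : Type*} [LinearOrder α] (s : Finset α) {m : ℕ}
    (h : #s = m) (k : Fin m) : #(s.filter (· < s.orderEmbOfFin h k)) = k := by
  have : s.filter (· < s.orderEmbOfFin h k) = (Iio k).map (s.orderEmbOfFin h).toEmbedding := by
    ext u
    simp only [mem_filter, mem_map, mem_Iio, RelEmbedding.coe_toEmbedding]
    constructor
    · rintro ⟨hu, hlt⟩
      obtain ⟨x, rfl⟩ : u ∈ Set.range (s.orderEmbOfFin h) := by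
        rwa [range_orderEmbOfFin]
      exact ⟨x, (s.orderEmbOfFin h).lt_iff_lt.1 hlt, rfl⟩
    · rintro ⟨x, hx, rfl⟩
      exact ⟨orderEmbOfFin_mem s h x, (s.orderEmbOfFin h).lt_iff_lt.2 hx⟩
  rw [this, card_map, Fin.card_Iio]

lemma orderEmbOfFin_eq_of_card_filter_lt {α : Type*} [LinearOrder α] {s : Finset α} {m c : ℕ}
    (h : #s = m) {u : α} (hu : u ∈ s) (hc : #(s.filter (· < u)) = c) (hcm : c < m) :
    s.orderEmbOfFin h ⟨c, hcm⟩ = u := by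
  obtain ⟨k, rfl⟩ : u ∈ Set.range (s.orderEmbOfFin h) := by rwa [range_orderEmbOfFin]
  rw [card_filter_lt_orderEmbOfFin] at hc
  exact congrArg _ (Fin.ext hc.symm)

lemma lt_iff_lt_of_forall_lt {α β γ : Type*} [LinearOrder α] [LinearOrder β] [LinearOrder γ]
    {f : α → β} {g : α → γ} (hf : Function.Injective f) (hg : Function.Injective g)
    (h : ∀ x y, x < y → (f x < f y ↔ g x < g y)) (x y : α) : f x < f y ↔ g x < g y := by
  rcases lt_trichotomy x y with hxy | rfl | hxy
  · exact h x y hxy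
  · simp
  · rw [← not_iff_not, not_lt, not_lt, (hf.ne hxy.ne).le_iff_lt, (hg.ne hxy.ne).le_iff_lt]
    exact h y x hxy

lemma swap_succ_lt_swap_succ_iff {m c : ℕ} (hc : c + 1 < m) {x y : Fin m} (hxy : x < y) :
    Equiv.swap (⟨c, by omega⟩ : Fin m) ⟨c + 1, hc⟩ x <
        Equiv.swap ⟨c, by omega⟩ ⟨c + 1, hc⟩ y ↔
      ¬ (x = ⟨c, by omega⟩ ∧ y = ⟨c + 1, hc⟩) := by
  rw [Fin.lt_def] at hxy
  simp only [Equiv.swap_apply_def, Fin.ext_iff, Fin.lt_def, apply_ite Fin.val]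
  split_ifs <;> omega

lemma lt_iff_of_strictMonoOn_insert {α β : Type*} [LinearOrder α] [LinearOrder β]
    {f : α → β} {i j : α} {T : Finset α} (hij : i < j) (hji : f j < f i)
    (hiT : StrictMonoOn f ↑(insert i T)) (hjT : StrictMonoOn f ↑(insert j T)) {s t : α}
    (hs : s ∈ insert i (insert j T)) (ht : t ∈ insert i (insert j T)) (hst : s < t) :
    f s < f t ↔ ¬ (s = i ∧ t = j) := by
  refine ⟨fun h ⟨hsi, htj⟩ => ?_, fun h => ?_⟩
  · subst hsi htj
    exact h.not_gt hji
  · have hboth :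
        (s ∈ insert i T ∧ t ∈ insert i T) ∨ (s ∈ insert j T ∧ t ∈ insert j T) := by
      simp only [mem_insert] at hs ht ⊢
      rcases hs with rfl | rfl | hs <;> rcases ht with rfl | rfl | ht <;>
        first | (exfalso; order) | tauto
    rcases hboth with ⟨hs, ht⟩ | ⟨hs, ht⟩
    · exact hiT hs ht hst
    · exact hjT hs ht hst

lemma contains_swap_succ_of_strictMonoOn {n m c : ℕ} {π : Equiv.Perm (Fin n)} {i j : Fin n}
    {T : Finset (Fin n)} (hij : i < j) (hji : π j < π i)
    (hiT : StrictMonoOn π ↑(insert i T)) (hjT : StrictMonoOn π ↑(insert j T))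
    (hm : #T + 2 = m) (hc : #(T.filter (· < i)) = c) (hcm : c + 1 < m) :
    Contains π (Equiv.swap ⟨c, by omega⟩ ⟨c + 1, hcm⟩) := by
  have hiT' : i ∉ T := fun h => hji.not_gt (hjT (by simp [h]) (by simp) hij)
  have hjT' : j ∉ T := fun h => hji.not_gt (hiT (by simp) (by simp [h]) hij)
  -- an element of `T` between `i` and `j` would have its value between `π i` and `π j`
  have hbetween : T.filter (· < j) = T.filter (· < i) := by
    ext t
    simp only [mem_filter, and_congr_right_iff]
    refine fun ht => ⟨fun htj => lt_of_not_ge fun hit => ?_, fun hti => hti.trans hij⟩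
    have hit' := hit.lt_of_ne (ne_of_mem_of_not_mem ht hiT').symm
    exact hji.not_gt ((hiT (by simp) (by simp [ht]) hit').trans (hjT (by simp [ht]) (by simp) htj))
  have hU : #(insert i (insert j T)) = m := by
    rw [card_insert_of_notMem (by simp [hij.ne, hiT']), card_insert_of_notMem hjT', ← hm]
  obtain ⟨f, hfU, hfc, hfc1⟩ : ∃ f : Fin m ↪o Fin n,
      (∀ x, f x ∈ insert i (insert j T)) ∧
        f ⟨c, Nat.lt_of_succ_lt hcm⟩ = i ∧ f ⟨c + 1, hcm⟩ = j := by
    refine ⟨_, orderEmbOfFin_mem _ hU, orderEmbOfFin_eq_of_card_filter_lt hU (by simp) ?_ _,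
      orderEmbOfFin_eq_of_card_filter_lt hU (by simp) ?_ _⟩
    · rw [filter_insert, filter_insert, if_neg (lt_irrefl i), if_neg hij.not_gt, hc]
    · rw [filter_insert, filter_insert, if_pos hij, if_neg (lt_irrefl j), hbetween,
        card_insert_of_notMem (by simp [hiT']), hc]
  refine ⟨f, f.strictMono,
    lt_iff_lt_of_forall_lt (π.injective.comp f.injective) (Equiv.injective _) fun x y hxy => ?_⟩
  rw [swap_succ_lt_swap_succ_iff hcm hxy,
    lt_iff_of_strictMonoOn_insert hij hji hiT hjT (hfU x) (hfU y) (f.lt_iff_lt.2 hxy), ← hfc,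
    ← hfc1, f.injective.eq_iff, f.injective.eq_iff]

lemma contains_idOplus21 {n a : ℕ} {π : Equiv.Perm (Fin n)} {i j : Fin n} {T : Finset (Fin n)}
    (hij : i < j) (hji : π j < π i) (hT : StrictMonoOn π T)
    (hbelow : ∀ t ∈ T, t < i ∧ π t < π j) (hcard : #T = a) :
    Contains π (idOplus21 a) := by
  refine contains_swap_succ_of_strictMonoOn (T := T) (m := a + 2) (c := a) hij hji ?_ ?_
    (by omega) ?_ (by omega)
  · rw [coe_insert, strictMonoOn_insert_iff_of_forall_le fun t ht => (hbelow t ht).1.le]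
    exact ⟨fun t ht _ => (hbelow t ht).2.trans hji, hT⟩
  · rw [coe_insert,
      strictMonoOn_insert_iff_of_forall_le fun t ht => ((hbelow t ht).1.trans hij).le]
    exact ⟨fun t ht _ => (hbelow t ht).2, hT⟩
  · rw [filter_true_of_mem fun t ht => (hbelow t ht).1, hcard]

lemma contains_p21OplusId {n b : ℕ} {π : Equiv.Perm (Fin n)} {i j : Fin n} {T : Finset (Fin n)}
    (hij : i < j) (hji : π j < π i) (hT : StrictMonoOn π T)
    (habove : ∀ t ∈ T, j < t ∧ π i < π t) (hcard : #T = b) :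
    Contains π (p21OplusId b) := by
  refine contains_swap_succ_of_strictMonoOn (T := T) (m := b + 2) (c := 0) hij hji ?_ ?_
    (by omega) ?_ (by omega)
  · rw [coe_insert,
      strictMonoOn_insert_iff_of_forall_ge fun t ht => (hij.trans (habove t ht).1).le]
    exact ⟨fun t ht _ => (habove t ht).2, hT⟩
  · rw [coe_insert, strictMonoOn_insert_iff_of_forall_ge fun t ht => (habove t ht).1.le]
    exact ⟨fun t ht _ => hji.trans (habove t ht).2, hT⟩
  · rw [card_eq_zero, filter_eq_empty_iff]
    exact fun t ht => (hij.trans (habove t ht).1).not_gt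

lemma card_Iio_add_two_le_of_avoids_idOplus21 {n a : ℕ} {π : Equiv.Perm (Fin n)} {i j : Fin n}
    (hij : i < j) (hji : π j < π i) (hA : Avoids π (idOplus21 a)) :
    #(Iio i) + 2 ≤ #(inversions π (Iic j)) + a := by
  set low := (Iio i).filter (π · < π j)
  set high := (Iio i).filter (¬ π · < π j)
  obtain ⟨T, hTlow, hTmono, hlow⟩ := exists_strictMonoOn_subset_card_le π low
  have hT : #T < a := by
    by_contra! h
    obtain ⟨T', hT'T, hT'⟩ := exists_subset_card_eq h
    exact hA (contains_idOplus21 hij hji (hTmono.mono (coe_subset.2 hT'T))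
      (fun t ht => by simpa [low] using hTlow (hT'T ht)) hT')
  have hpart : #low + #high = #(Iio i) := card_filter_add_card_filter_not _
  have hsub : inversions π low ∪ (insert i high) ×ˢ {j} ⊆ inversions π (Iic j) := by
    refine union_subset (inversions_mono π fun t ht => ?_) ?_
    · exact mem_Iic.2 ((mem_Iio.1 (mem_filter.1 ht).1).trans hij).le
    · rintro ⟨s, t⟩ hst
      simp only [mem_product, mem_insert, mem_singleton, high, mem_filter, mem_Iio] at hst
      obtain ⟨hs, rfl⟩ := hst
      simp only [inversions, mem_filter, mem_product, mem_Iic]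
      rcases hs with rfl | ⟨hsi, hsj⟩
      · exact ⟨⟨hij.le, le_rfl⟩, hij, hji⟩
      · have hst := hsi.trans hij
        exact ⟨⟨hst.le, le_rfl⟩, hst, (not_lt.1 hsj).lt_of_ne (π.injective.ne hst.ne')⟩
  have hdisj : Disjoint (inversions π low) ((insert i high) ×ˢ {j}) := by
    rw [disjoint_left]
    rintro ⟨s, t⟩ hlow hhigh
    simp only [inversions, low, mem_filter, mem_product, mem_Iio] at hlow
    simp only [mem_product, mem_singleton] at hhigh
    exact (hlow.1.2.1.trans hij).ne hhigh.2
  have hcard := card_le_card hsub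
  rw [card_union_of_disjoint hdisj, card_product, card_singleton,
    card_insert_of_notMem (by simp [high])] at hcard
  omega

lemma card_Ioi_add_two_le_of_avoids_p21OplusId {n b : ℕ} {π : Equiv.Perm (Fin n)} {i j : Fin n}
    (hij : i < j) (hji : π j < π i) (hB : Avoids π (p21OplusId b)) :
    #(Ioi j) + 2 ≤ #(inversions π (Ici i)) + b := by
  set high := (Ioi j).filter (π i < π ·)
  set low := (Ioi j).filter (¬ π i < π ·)
  obtain ⟨T, hThigh, hTmono, hhigh⟩ := exists_strictMonoOn_subset_card_le π high
  have hT : #T < b := by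
    by_contra! h
    obtain ⟨T', hT'T, hT'⟩ := exists_subset_card_eq h
    exact hB (contains_p21OplusId hij hji (hTmono.mono (coe_subset.2 hT'T))
      (fun t ht => by simpa [high] using hThigh (hT'T ht)) hT')
  have hpart : #high + #low = #(Ioi j) := card_filter_add_card_filter_not _
  have hsub : inversions π high ∪ {i} ×ˢ (insert j low) ⊆ inversions π (Ici i) := by
    refine union_subset (inversions_mono π fun t ht => ?_) ?_
    · exact mem_Ici.2 (hij.trans (mem_Ioi.1 (mem_filter.1 ht).1)).le
    · rintro ⟨s, t⟩ hst
      simp only [mem_product, mem_insert, mem_singleton, low, mem_filter, mem_Ioi] at hst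
      obtain ⟨rfl, ht⟩ := hst
      simp only [inversions, mem_filter, mem_product, mem_Ici]
      rcases ht with rfl | ⟨hjt, hit⟩
      · exact ⟨⟨le_rfl, hij.le⟩, hij, hji⟩
      · have hst := hij.trans hjt
        exact ⟨⟨le_rfl, hst.le⟩, hst, (not_lt.1 hit).lt_of_ne (π.injective.ne hst.ne')⟩
  have hdisj : Disjoint (inversions π high) ({i} ×ˢ (insert j low)) := by
    rw [disjoint_left]
    rintro ⟨s, t⟩ hhigh hlow
    simp only [inversions, high, mem_filter, mem_product, mem_Ioi] at hhigh
    simp only [mem_product, mem_singleton] at hlow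
    exact (hij.trans hhigh.1.1.1).ne' hlow.1
  have hcard := card_le_card hsub
  rw [card_union_of_disjoint hdisj, card_product, card_singleton,
    card_insert_of_notMem (by simp [low])] at hcard
  omega

lemma exists_succ_lt_castSucc_of_invCount_pos {m : ℕ} {π : Equiv.Perm (Fin (m + 1))}
    (h : 0 < invCount π) : ∃ p : Fin m, π p.succ < π p.castSucc := by
  by_contra! hle
  have hmono : StrictMono π := Fin.strictMono_iff_lt_succ.2 fun p =>
    (hle p).lt_of_ne (π.injective.ne p.castSucc_lt_succ.ne)
  rw [invCount_eq_card_inversions, card_pos] at h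
  obtain ⟨⟨s, t⟩, hst⟩ := h
  simp only [inversions, mem_filter] at hst
  exact (hmono hst.2.1).not_gt hst.2.2

lemma Iic_succ_inter_Ici_castSucc {m : ℕ} (p : Fin m) :
    Iic p.succ ∩ Ici p.castSucc = {p.castSucc, p.succ} := by
  ext t
  simp only [mem_inter, mem_Iic, mem_Ici, mem_insert, mem_singleton, Fin.le_def, Fin.ext_iff,
    Fin.val_castSucc, Fin.val_succ]
  omega

/-- For all `a, b ≥ 0`, every `k ≥ 1` and every `n ≥ k + a + b`, no permutation of
length `n` with exactly `k` inversions avoids both `id_a ⊕ 21` and `21 ⊕ id_b`. -/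
theorem av_idOplus21_p21OplusId_eq_zero (a b k n : ℕ) (hk : 1 ≤ k) (hn : k + a + b ≤ n) :
    Nat.card {π : Equiv.Perm (Fin n) // invCount π = k ∧
      Avoids π (idOplus21 a) ∧ Avoids π (p21OplusId b)} = 0 := by
  rw [Nat.card_eq_zero, isEmpty_subtype]
  refine Or.inl fun π ⟨hinv, hA, hB⟩ => ?_
  obtain ⟨m, rfl⟩ : ∃ m, n = m + 1 := ⟨n - 1, by omega⟩
  obtain ⟨p, hp⟩ := exists_succ_lt_castSucc_of_invCount_pos (π := π) (by omega)
  have hij := p.castSucc_lt_succ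
  have hleft := card_Iio_add_two_le_of_avoids_idOplus21 hij hp hA
  have hright := card_Ioi_add_two_le_of_avoids_p21OplusId hij hp hB
  have hsplit := card_inversions_add_card_inversions_le π (Iic p.succ) (Ici p.castSucc)
  have hpair := card_le_card (inversions_pair_subset π hij)
  have htotal := card_le_card (inversions_mono π (subset_univ (Iic p.succ ∪ Ici p.castSucc)))
  rw [Iic_succ_inter_Ici_castSucc] at hsplit
  rw [← invCount_eq_card_inversions, hinv] at htotal
  rw [Fin.card_Iio, Fin.val_castSucc] at hleft
  rw [Fin.card_Ioi, Fin.val_succ] at hright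
  rw [card_singleton] at hpair
  omega
end

section
/- For every k ≥ 0 and every n ≥ k + 2, the number of permutations of length n with exactly k inversions that avoid both 1324 and 1342 equals op(k), the number of overpartitions of k. -/
def p1342 : Equiv.Perm (Fin 4) := ⟨![0,2,3,1], ![0,3,1,2], by decide, by decide⟩

/-- `op k`: the number of pairs `(λ, μ)` of integer partitions with `|λ| + |μ| = k`
such that all parts of `μ` are distinct; this equals the number of overpartitions of `k`. -/
noncomputable def op (k : ℕ) : ℕ :=
  ∑ i ∈ Finset.range (k + 1),
    Nat.card (Nat.Partition i) * Nat.card {μ : Nat.Partition (k - i) // μ.parts.Nodup}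

/-!
Encode `π` by its Lehmer code `c j = #{l > j | π l < π j}`: the entries sum to `inv π`, satisfy
`c j ≤ n - 1 - j`, and determine `π`. The permutation `π` avoids both `1324` and `1342` iff every
ascent `c i < c j` (`i < j`) of its code ends at a saturated entry `c j = n - 1 - j`, i.e. at a
value `π j` exceeding everything to its right. When `n ≥ k + 2`, an entry before the first zero
of the code cannot be saturated, since the positive entries before it already sum to at least
its position. So the code is a weakly decreasing run of positive entries (a partition `λ`), a
zero, and then zeros and saturated entries; a saturated entry is determined by its value, so
these form a partition `μ` into distinct parts, and `|λ| + |μ| = k`. Conversely every such pair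
`(λ, μ)` arises exactly once.
-/

open Finset

variable {n : ℕ}

namespace Equiv.Perm

def lehmer (π : Equiv.Perm (Fin n)) (j : Fin n) : ℕ :=
  #{l | j < l ∧ π l < π j}

lemma lehmer_subset_Ioi (π : Equiv.Perm (Fin n)) (j : Fin n) :
    ({l | j < l ∧ π l < π j} : Finset (Fin n)) ⊆ Ioi j := fun l hl => by
  simp only [mem_filter, mem_univ, true_and] at hl
  exact mem_Ioi.2 hl.1

lemma lehmer_add_le (π : Equiv.Perm (Fin n)) (j : Fin n) : π.lehmer j + j + 1 ≤ n := by
  have := card_le_card (lehmer_subset_Ioi π j)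
  rw [Fin.card_Ioi] at this
  unfold lehmer
  omega

lemma lehmer_add_eq_iff (π : Equiv.Perm (Fin n)) (j : Fin n) :
    π.lehmer j + j + 1 = n ↔ ∀ l, j < l → π l < π j := by
  have hcard : #(Ioi j) + j + 1 = n := by rw [Fin.card_Ioi]; omega
  constructor
  · intro h l hl
    have hsub := eq_of_subset_of_card_le (lehmer_subset_Ioi π j) (by unfold lehmer at h; omega)
    have : l ∈ ({l | j < l ∧ π l < π j} : Finset (Fin n)) := hsub ▸ mem_Ioi.2 hl
    exact (mem_filter.1 this).2.2
  · intro h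
    have : ({l | j < l ∧ π l < π j} : Finset (Fin n)) = Ioi j := by
      ext l; simpa using fun hl => h l hl
    rw [lehmer, this, hcard]

lemma invCount_eq_sum_lehmer (π : Equiv.Perm (Fin n)) : invCount π = ∑ j, π.lehmer j := by
  rw [invCount, Nat.card_eq_fintype_card, Fintype.card_subtype, card_filter,
    Fintype.sum_prod_type]
  simp only [lehmer, card_filter]

/-- `π 0 = c 0` (clamped into `Fin (m + 1)`), and the later values are those of `ofLehmer` of
the tail of `c`, shifted past `π 0`. -/
def ofLehmer : {n : ℕ} → (Fin n → ℕ) → Equiv.Perm (Fin n)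
  | 0, _ => 1
  | m + 1, c =>
      ((finSuccEquiv' 0).trans (ofLehmer fun i => c i.succ).optionCongr).trans
        (finSuccEquiv' ⟨min (c 0) m, Nat.lt_succ_of_le (min_le_right _ _)⟩).symm

lemma ofLehmer_zero {m : ℕ} (c : Fin (m + 1) → ℕ) :
    ofLehmer c 0 = ⟨min (c 0) m, Nat.lt_succ_of_le (min_le_right _ _)⟩ := by
  simp [ofLehmer, finSuccEquiv'_symm_none]

lemma ofLehmer_succ {m : ℕ} (c : Fin (m + 1) → ℕ) (i : Fin m) :
    ofLehmer c i.succ = Fin.succAbove ⟨min (c 0) m, Nat.lt_succ_of_le (min_le_right _ _)⟩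
      (ofLehmer (fun i => c i.succ) i) := by
  simp [ofLehmer]; rfl

lemma lehmer_zero {m : ℕ} (π : Equiv.Perm (Fin (m + 1))) : π.lehmer 0 = π 0 := by
  rw [lehmer, card_equiv π (t := Iio (π 0)), Fin.card_Iio]
  intro l
  simp only [mem_filter, mem_univ, true_and, mem_Iio, and_iff_right_iff_imp, Fin.pos_iff_ne_zero]
  rintro hl rfl
  exact lt_irrefl _ hl

lemma lehmer_succ {m : ℕ} {π : Equiv.Perm (Fin (m + 1))} {σ : Equiv.Perm (Fin m)}
    {a : Fin (m + 1)} (hs : ∀ i, π i.succ = a.succAbove (σ i)) (i : Fin m) :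
    π.lehmer i.succ = σ.lehmer i := by
  simp only [lehmer, card_filter, Fin.sum_univ_succ, hs, Fin.succ_lt_succ_iff,
    Fin.succAbove_lt_succAbove_iff, Fin.not_lt_zero, false_and, if_false, zero_add]

lemma lehmer_ofLehmer : ∀ {n : ℕ} {c : Fin n → ℕ}, (∀ j : Fin n, c j + j + 1 ≤ n) →
    (ofLehmer c).lehmer = c
  | 0, _, _ => funext fun j => j.elim0
  | m + 1, c, hc => by
    funext j
    cases j using Fin.cases with
    | zero =>
      have := hc 0
      rw [lehmer_zero, ofLehmer_zero]
      simp only [Fin.val_zero] at this ⊢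
      omega
    | succ j =>
      have htail : ∀ i : Fin m, c i.succ + i + 1 ≤ m := fun i => by
        have := hc i.succ
        simp only [Fin.val_succ] at this
        omega
      rw [lehmer_succ (ofLehmer_succ c), lehmer_ofLehmer htail]

lemma lehmer_injective : Function.Injective (lehmer (n := n)) := by
  -- `lehmer` maps onto the `n!` codes with `c j < n - j`, as many as there are permutations.
  let code : Equiv.Perm (Fin n) → (∀ j : Fin n, Fin (n - j)) := fun π j =>
    ⟨π.lehmer j, by have := π.lehmer_add_le j; omega⟩
  have hsurj : Function.Surjective code := fun c => ⟨ofLehmer fun j => c j, by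
    have hc : ∀ j : Fin n, (c j : ℕ) + j + 1 ≤ n := fun j => by have := (c j).2; omega
    funext j
    exact Fin.ext (congrFun (lehmer_ofLehmer hc) j)⟩
  have hcard : Fintype.card (Equiv.Perm (Fin n)) = Fintype.card (∀ j : Fin n, Fin (n - j)) := by
    rw [Fintype.card_perm, Fintype.card_fin, Fintype.card_pi]
    simp only [Fintype.card_fin]
    rw [Fin.prod_univ_eq_prod_range (fun j => n - j), ← Nat.descFactorial_eq_prod_range,
      Nat.descFactorial_self]
  intro π σ h
  exact ((Fintype.bijective_iff_surjective_and_card code).2 ⟨hsurj, hcard⟩).1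
    (funext fun j => Fin.ext (congrFun h j))

end Equiv.Perm
lemma strictMono_vec4_iff {α : Type*} [Preorder α] {a b c d : α} :
    StrictMono ![a, b, c, d] ↔ a < b ∧ b < c ∧ c < d := by
  simp [strictMono_vecCons, Subsingleton.strictMono]

lemma contains_iff {m : ℕ} {π : Equiv.Perm (Fin n)} {p : Equiv.Perm (Fin m)} :
    Contains π p ↔ ∃ f : Fin m → Fin n, StrictMono f ∧ StrictMono (π ∘ f ∘ p.symm) := by
  refine exists_congr fun f => and_congr_right fun _ => ⟨fun h a b hab => ?_, fun h a b => ?_⟩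
  · simpa using (h _ _).2 (by simpa using hab)
  · simpa using h.lt_iff_lt (a := p a) (b := p b)

lemma contains_p1324_iff {π : Equiv.Perm (Fin n)} : Contains π p1324 ↔
    ∃ a b c d, a < b ∧ b < c ∧ c < d ∧ π a < π c ∧ π c < π b ∧ π b < π d := by
  rw [contains_iff]
  constructor
  · rintro ⟨f, hf, hv⟩
    exact ⟨f 0, f 1, f 2, f 3, hf (by decide), hf (by decide), hf (by decide),
      hv (by decide : (0 : Fin 4) < 1), hv (by decide : (1 : Fin 4) < 2),
      hv (by decide : (2 : Fin 4) < 3)⟩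
  · rintro ⟨a, b, c, d, hab, hbc, hcd, v₁, v₂, v₃⟩
    refine ⟨![a, b, c, d], strictMono_vec4_iff.2 ⟨hab, hbc, hcd⟩, ?_⟩
    have : π ∘ ![a, b, c, d] ∘ p1324.symm = ![π a, π c, π b, π d] := by
      funext x; fin_cases x <;> rfl
    exact this ▸ strictMono_vec4_iff.2 ⟨v₁, v₂, v₃⟩

lemma contains_p1342_iff {π : Equiv.Perm (Fin n)} : Contains π p1342 ↔
    ∃ a b c d, a < b ∧ b < c ∧ c < d ∧ π a < π d ∧ π d < π b ∧ π b < π c := by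
  rw [contains_iff]
  constructor
  · rintro ⟨f, hf, hv⟩
    exact ⟨f 0, f 1, f 2, f 3, hf (by decide), hf (by decide), hf (by decide),
      hv (by decide : (0 : Fin 4) < 1), hv (by decide : (1 : Fin 4) < 2),
      hv (by decide : (2 : Fin 4) < 3)⟩
  · rintro ⟨a, b, c, d, hab, hbc, hcd, v₁, v₂, v₃⟩
    refine ⟨![a, b, c, d], strictMono_vec4_iff.2 ⟨hab, hbc, hcd⟩, ?_⟩
    have : π ∘ ![a, b, c, d] ∘ p1342.symm = ![π a, π d, π b, π c] := by
      funext x; fin_cases x <;> rfl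
    exact this ▸ strictMono_vec4_iff.2 ⟨v₁, v₂, v₃⟩

lemma contains_p1324_or_p1342_iff {π : Equiv.Perm (Fin n)} :
    Contains π p1324 ∨ Contains π p1342 ↔
      ∃ a b e l, a < b ∧ b < e ∧ b < l ∧ π a < π e ∧ π e < π b ∧ π b < π l := by
  rw [contains_p1324_iff, contains_p1342_iff]
  constructor
  · rintro (⟨a, b, c, d, hab, hbc, hcd, v⟩ | ⟨a, b, c, d, hab, hbc, hcd, v⟩)
    · exact ⟨a, b, c, d, hab, hbc, hbc.trans hcd, v⟩
    · exact ⟨a, b, d, c, hab, hbc.trans hcd, hbc, v⟩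
  · rintro ⟨a, b, e, l, hab, hbe, hbl, v₁, v₂, v₃⟩
    rcases lt_or_gt_of_ne (show e ≠ l by rintro rfl; exact v₂.not_gt v₃) with hel | hle
    · exact Or.inl ⟨a, b, e, l, hab, hbe, hel, v₁, v₂, v₃⟩
    · exact Or.inr ⟨a, b, l, e, hab, hbl, hle, v₁, v₂, v₃⟩

namespace Equiv.Perm

lemma exists_between_of_lehmer_lt {π : Equiv.Perm (Fin n)} {i j : Fin n} (hij : i < j)
    (h : π.lehmer i < π.lehmer j) : ∃ e, j < e ∧ π i < π e ∧ π e < π j := by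
  by_contra! hnone
  refine h.not_ge (card_le_card fun e he => ?_)
  simp only [mem_filter, mem_univ, true_and] at he ⊢
  refine ⟨hij.trans he.1, lt_of_le_of_ne (not_lt.1 fun hie => ?_) (π.injective.ne ?_)⟩
  · exact (hnone e he.1 hie).not_gt he.2
  · exact (hij.trans he.1).ne'

lemma exists_lehmer_lt_of_between {π : Equiv.Perm (Fin n)} {a₀ b e : Fin n} (ha₀ : a₀ < b)
    (hbe : b < e) (v₁ : π a₀ < π e) (v₂ : π e < π b) : ∃ a, a < b ∧ π.lehmer a < π.lehmer b := by
  -- For the last position `a` before `b` with `π a < π e`, every position strictly between `a`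
  -- and `b` carries a value above `π e`.
  obtain ⟨a, ha, hlast⟩ := exists_max_image ({x | x < b ∧ π x < π e} : Finset (Fin n)) id
    ⟨a₀, by simp [ha₀, v₁]⟩
  simp only [mem_filter, mem_univ, true_and, id] at ha hlast
  obtain ⟨hab, hae⟩ := ha
  refine ⟨a, hab, card_lt_card ((ssubset_iff_of_subset fun x hx => ?_).2 ⟨e, ?_, ?_⟩)⟩
  · simp only [mem_filter, mem_univ, true_and] at hx ⊢
    have hxb : π x < π b := hx.2.trans (hae.trans v₂)
    refine ⟨lt_of_not_ge fun hxb' => ?_, hxb⟩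
    rcases hxb'.lt_or_eq with hxb' | rfl
    · exact (hlast x ⟨hxb', hx.2.trans hae⟩).not_gt hx.1
    · exact lt_irrefl _ hxb
  · simp [hbe, v₂]
  · simp [hae.le]

lemma exists_pattern_iff_exists_lehmer_lt {π : Equiv.Perm (Fin n)} :
    (∃ a b e l, a < b ∧ b < e ∧ b < l ∧ π a < π e ∧ π e < π b ∧ π b < π l) ↔
      ∃ i j, i < j ∧ π.lehmer i < π.lehmer j ∧ π.lehmer j + j + 1 ≠ n := by
  simp only [ne_eq, lehmer_add_eq_iff, not_forall, not_lt, exists_prop]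
  constructor
  · rintro ⟨a₀, b, e, l, ha₀b, hbe, hbl, v₁, v₂, v₃⟩
    obtain ⟨a, hab, hlt⟩ := exists_lehmer_lt_of_between ha₀b hbe v₁ v₂
    exact ⟨a, b, hab, hlt, l, hbl, v₃.le⟩
  · rintro ⟨i, j, hij, hlt, l, hjl, hl⟩
    obtain ⟨e, hje, v₁, v₂⟩ := exists_between_of_lehmer_lt hij hlt
    exact ⟨i, j, e, l, hij, hje, hjl, v₁, v₂,
      lt_of_le_of_ne hl (π.injective.ne hjl.ne)⟩

end Equiv.Perm

lemma avoids_p1324_and_p1342_iff (π : Equiv.Perm (Fin n)) :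
    Avoids π p1324 ∧ Avoids π p1342 ↔
      ∀ i j, i < j → π.lehmer i < π.lehmer j → π.lehmer j + j + 1 = n := by
  rw [Avoids, Avoids, ← not_or, contains_p1324_or_p1342_iff,
    Equiv.Perm.exists_pattern_iff_exists_lehmer_lt]
  push Not
  rfl

/-- Lehmer codes, extended by zero to `ℕ`, of the permutations counted by the theorem. -/
structure IsAdmissibleCode (n k : ℕ) (c : ℕ → ℕ) : Prop where
  add_le : ∀ j < n, c j + j + 1 ≤ n
  eq_zero : ∀ j, n ≤ j → c j = 0
  sum_eq : ∑ j ∈ range n, c j = k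
  ascent : ∀ i j, i < j → c i < c j → c j + j + 1 = n

namespace Equiv.Perm

def lehmerNat (π : Equiv.Perm (Fin n)) (j : ℕ) : ℕ :=
  if h : j < n then π.lehmer ⟨j, h⟩ else 0

lemma lehmerNat_of_lt (π : Equiv.Perm (Fin n)) {j : ℕ} (hj : j < n) :
    π.lehmerNat j = π.lehmer ⟨j, hj⟩ :=
  dif_pos hj

lemma lehmerNat_fin (π : Equiv.Perm (Fin n)) (j : Fin n) : π.lehmerNat j = π.lehmer j :=
  dif_pos j.2

lemma lehmerNat_of_le (π : Equiv.Perm (Fin n)) {j : ℕ} (hj : n ≤ j) : π.lehmerNat j = 0 :=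
  dif_neg hj.not_gt

lemma lehmerNat_injective : Function.Injective (lehmerNat (n := n)) := fun π σ h =>
  lehmer_injective <| funext fun j => by rw [← lehmerNat_fin, ← lehmerNat_fin, h]

lemma isAdmissibleCode_lehmerNat_iff {k : ℕ} (π : Equiv.Perm (Fin n)) :
    IsAdmissibleCode n k π.lehmerNat ↔ invCount π = k ∧ Avoids π p1324 ∧ Avoids π p1342 := by
  have hsum : ∑ j ∈ range n, π.lehmerNat j = invCount π := by
    rw [invCount_eq_sum_lehmer, ← Fin.sum_univ_eq_sum_range]
    simp only [lehmerNat_fin]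
  have hascent : (∀ i j : ℕ, i < j → π.lehmerNat i < π.lehmerNat j →
      π.lehmerNat j + j + 1 = n) ↔
      ∀ i j : Fin n, i < j → π.lehmer i < π.lehmer j → π.lehmer j + j + 1 = n := by
    refine ⟨fun h i j hij hlt => ?_, fun h i j hij hlt => ?_⟩
    · simpa only [lehmerNat_fin] using h i j hij (by simpa only [lehmerNat_fin] using hlt)
    · by_cases hj : j < n
      · rw [π.lehmerNat_of_lt hj] at hlt ⊢
        rw [π.lehmerNat_of_lt (hij.trans hj)] at hlt
        exact h _ _ hij hlt
      · rw [π.lehmerNat_of_le (not_lt.1 hj)] at hlt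
        omega
  rw [avoids_p1324_and_p1342_iff, ← hascent, ← hsum]
  exact ⟨fun hc => ⟨hc.sum_eq, hc.ascent⟩, fun ⟨hs, ha⟩ =>
    ⟨fun j hj => π.lehmerNat_of_lt hj ▸ π.lehmer_add_le ⟨j, hj⟩,
      fun j hj => π.lehmerNat_of_le hj, hs, ha⟩⟩

lemma exists_lehmerNat_eq {k : ℕ} {c : ℕ → ℕ} (hc : IsAdmissibleCode n k c) :
    ∃ π : Equiv.Perm (Fin n), π.lehmerNat = c := by
  refine ⟨ofLehmer fun j => c j, funext fun j => ?_⟩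
  by_cases hj : j < n
  · have := congrFun (lehmer_ofLehmer fun j : Fin n => hc.add_le j j.2) ⟨j, hj⟩
    rwa [← lehmerNat_fin] at this
  · rw [lehmerNat_of_le _ (not_lt.1 hj), hc.eq_zero j (not_lt.1 hj)]

end Equiv.Perm

lemma card_avoiding_eq_card_admissibleCode (n k : ℕ) :
    Nat.card {π : Equiv.Perm (Fin n) // invCount π = k ∧ Avoids π p1324 ∧ Avoids π p1342} =
      Nat.card {c : ℕ → ℕ // IsAdmissibleCode n k c} := by
  refine Nat.card_congr (Equiv.ofBijective
    (fun π => ⟨π.1.lehmerNat, (π.1.isAdmissibleCode_lehmerNat_iff).2 π.2⟩) ⟨?_, ?_⟩)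
  · exact fun π σ h => Subtype.ext (Equiv.Perm.lehmerNat_injective (congrArg Subtype.val h))
  · rintro ⟨c, hc⟩
    obtain ⟨π, rfl⟩ := Equiv.Perm.exists_lehmerNat_eq hc
    exact ⟨⟨π, π.isAdmissibleCode_lehmerNat_iff.1 hc⟩, rfl⟩

section CodeSplitting

variable (n) (c : ℕ → ℕ)

def unsaturatedParts : Multiset ℕ :=
  ({j ∈ range n | c j ≠ 0 ∧ c j + j + 1 ≠ n} : Finset ℕ).val.map c

/-- The nonzero entries attaining their bound, `c j = n - 1 - j`; each determines its position. -/
def saturatedParts : Finset ℕ :=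
  ({j ∈ range n | c j ≠ 0 ∧ c j + j + 1 = n} : Finset ℕ).image c

variable {n c}

lemma pos_of_mem_unsaturatedParts {m : ℕ} (hm : m ∈ unsaturatedParts n c) : 0 < m := by
  obtain ⟨j, hj, rfl⟩ := Multiset.mem_map.1 hm
  rw [mem_val] at hj
  exact Nat.pos_of_ne_zero (mem_filter.1 hj).2.1

lemma mem_saturatedParts {m : ℕ} :
    m ∈ saturatedParts n c ↔ 0 < m ∧ m < n ∧ c (n - 1 - m) = m := by
  simp only [saturatedParts, mem_image, mem_filter, mem_range]
  constructor
  · rintro ⟨j, ⟨hj, h0, hsat⟩, rfl⟩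
    rw [show n - 1 - c j = j by omega]
    omega
  · rintro ⟨hm, hmn, hc⟩
    exact ⟨n - 1 - m, ⟨by omega, by omega, by omega⟩, hc⟩

lemma sum_range_eq_sum_unsaturatedParts_add :
    ∑ j ∈ range n, c j = (unsaturatedParts n c).sum + ∑ m ∈ saturatedParts n c, m := by
  rw [← sum_filter_ne_zero, ← sum_filter_add_sum_filter_not _ (fun j => c j + j + 1 = n),
    filter_filter, filter_filter, add_comm, saturatedParts, sum_image, unsaturatedParts,
    ← sum_eq_multiset_sum]
  intro i hi j hj hij
  simp only [coe_filter, mem_range, Set.mem_ofPred_eq] at hi hj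
  omega

end CodeSplitting

namespace IsAdmissibleCode

variable {k t : ℕ} {c : ℕ → ℕ}

lemma le_of_forall_lt_ne_zero (hc : IsAdmissibleCode n k c) (hpos : ∀ j < t, c j ≠ 0) :
    t ≤ n :=
  not_lt.1 fun hnt => hpos n hnt (hc.eq_zero n le_rfl)

lemma add_le_of_forall_lt_ne_zero (hc : IsAdmissibleCode n k c) (hpos : ∀ j < t, c j ≠ 0)
    {j : ℕ} (hj : j < t) : c j + j ≤ k := by
  have hjn := hj.trans_le (hc.le_of_forall_lt_ne_zero hpos)
  have hprefix : j ≤ ∑ i ∈ range j, c i := by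
    simpa using card_nsmul_le_sum (range j) c 1 fun i hi =>
      Nat.one_le_iff_ne_zero.2 (hpos i ((mem_range.1 hi).trans hj))
  have hsub : ∑ i ∈ range (j + 1), c i ≤ k :=
    hc.sum_eq ▸ sum_le_sum_of_subset (range_subset_range.2 hjn)
  rw [sum_range_succ] at hsub
  omega

lemma filter_eq_range (hc : IsAdmissibleCode n k c) (hn : k + 2 ≤ n) (ht : c t = 0)
    (hpos : ∀ j < t, c j ≠ 0) : {j ∈ range n | c j ≠ 0 ∧ c j + j + 1 ≠ n} = range t := by
  ext j
  simp only [mem_filter, mem_range]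
  constructor
  · rintro ⟨hjn, h0, hsat⟩
    by_contra! htj
    exact hsat (hc.ascent t j (htj.lt_of_ne fun h => h0 (h ▸ ht)) (by omega))
  · intro hj
    have := hc.add_le_of_forall_lt_ne_zero hpos hj
    exact ⟨by omega, hpos j hj, by omega⟩

lemma sort_unsaturatedParts (hc : IsAdmissibleCode n k c) (hn : k + 2 ≤ n) (ht : c t = 0)
    (hpos : ∀ j < t, c j ≠ 0) : (unsaturatedParts n c).sort (· ≥ ·) = (List.range t).map c := by
  rw [unsaturatedParts, hc.filter_eq_range hn ht hpos, range_val, Multiset.range,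
    Multiset.map_coe, Multiset.coe_sort]
  refine List.mergeSort_eq_self _ (List.pairwise_iff_getElem.2 fun i j hi hj hij => ?_)
  simp only [List.length_map, List.length_range] at hj
  simp only [List.getElem_map, List.getElem_range]
  by_contra! hlt
  have := hc.ascent i j hij hlt
  have := hc.add_le_of_forall_lt_ne_zero hpos hj
  omega

end IsAdmissibleCode

lemma List.getElem_add_le_sum {L : List ℕ} (hL : ∀ x ∈ L, 0 < x) {j : ℕ} (hj : j < L.length) :
    L[j] + j ≤ L.sum := by
  have htake : j ≤ (L.take j).sum := by
    simpa [hj.le] using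
      (L.take j).length_le_sum_of_one_le fun x hx => hL x (List.mem_of_mem_take hx)
  have hdrop : L[j] ≤ (L.drop j).sum :=
    List.le_sum_of_mem (List.mem_iff_getElem.2 ⟨0, by simpa using hj, by simp⟩)
  rw [← L.sum_take_add_sum_drop j]
  omega

/-- A pair `(λ, μ)` of partitions with `|λ| + |μ| = k` and `μ` into distinct parts;
`μ` is recorded by its set of parts. -/
@[ext]
structure PartitionPair (k : ℕ) where
  parts : Multiset ℕ
  distinctParts : Finset ℕ
  parts_pos : ∀ x ∈ parts, 0 < x
  distinctParts_pos : ∀ x ∈ distinctParts, 0 < x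
  sum_add_sum : parts.sum + ∑ m ∈ distinctParts, m = k

namespace PartitionPair

def equivSigma (k : ℕ) : PartitionPair k ≃
    Σ i : Fin (k + 1), Nat.Partition i × {μ : Nat.Partition (k - i) // μ.parts.Nodup} where
  toFun P := ⟨⟨P.parts.sum, by have := P.sum_add_sum; omega⟩,
    ⟨P.parts, P.parts_pos _, rfl⟩,
    ⟨⟨P.distinctParts.val, P.distinctParts_pos _, by
      have := P.sum_add_sum
      simp only [sum_eq_multiset_sum, Multiset.map_id'] at this
      change _ = k - P.parts.sum
      omega⟩,
      P.distinctParts.nodup⟩⟩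
  invFun x := ⟨x.2.1.parts, ⟨x.2.2.1.parts, x.2.2.2⟩, fun _ => x.2.1.parts_pos,
    fun _ => x.2.2.1.parts_pos, by
      have := x.1.2
      simp only [sum_eq_multiset_sum, Multiset.map_id', x.2.1.parts_sum, x.2.2.1.parts_sum]
      omega⟩
  left_inv P := rfl
  right_inv := by
    rintro ⟨⟨i, hi⟩, ⟨l, hl, hli⟩, μ⟩
    obtain rfl : l.sum = i := hli
    rfl

lemma card_eq_op (k : ℕ) : Nat.card (PartitionPair k) = op k := by
  classical
  rw [Nat.card_congr (equivSigma k), Nat.card_eq_fintype_card, Fintype.card_sigma, op,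
    ← Fin.sum_univ_eq_sum_range]
  simp only [Fintype.card_prod, Nat.card_eq_fintype_card]

section

variable {k : ℕ} (P : PartitionPair k)

def sortedParts : List ℕ := P.parts.sort (· ≥ ·)

lemma coe_sortedParts : (P.sortedParts : Multiset ℕ) = P.parts := Multiset.sort_eq _ _

lemma pos_of_mem_sortedParts {x : ℕ} (hx : x ∈ P.sortedParts) : 0 < x :=
  P.parts_pos x (by rw [← coe_sortedParts]; exact hx)

lemma sum_sortedParts : P.sortedParts.sum = P.parts.sum := by
  rw [← Multiset.sum_coe, coe_sortedParts]

lemma getElem_sortedParts_add_le {j : ℕ} (hj : j < P.sortedParts.length) :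
    P.sortedParts[j] + j ≤ P.parts.sum :=
  P.sum_sortedParts ▸ List.getElem_add_le_sum (fun _ => P.pos_of_mem_sortedParts) hj

lemma length_sortedParts_le : P.sortedParts.length ≤ P.parts.sum :=
  P.sum_sortedParts ▸ List.length_le_sum_of_one_le _ fun _ => P.pos_of_mem_sortedParts

lemma le_of_mem_distinctParts {m : ℕ} (hm : m ∈ P.distinctParts) : m + P.parts.sum ≤ k := by
  have := single_le_sum (fun i _ => Nat.zero_le i) hm
  have := P.sum_add_sum
  omega

/-- The code of `P`: the parts of `λ` in decreasing order, followed by zeros, except that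
`c j = n - 1 - j` at the positions `j = n - 1 - m`, `m ∈ μ`. -/
def toCode (n : ℕ) (j : ℕ) : ℕ :=
  if h : j < P.sortedParts.length then P.sortedParts[j]
  else if n - 1 - j ∈ P.distinctParts then n - 1 - j else 0

lemma toCode_of_lt {j : ℕ} (hj : j < P.sortedParts.length) :
    P.toCode n j = P.sortedParts[j] :=
  dif_pos hj

lemma toCode_of_le {j : ℕ} (hj : P.sortedParts.length ≤ j) :
    P.toCode n j = if n - 1 - j ∈ P.distinctParts then n - 1 - j else 0 :=
  dif_neg hj.not_gt

section

variable (hn : k + 2 ≤ n)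
include hn

lemma toCode_add_lt {j : ℕ} (hj : j < P.sortedParts.length) : P.toCode n j + j + 1 < n := by
  have := P.getElem_sortedParts_add_le hj
  have := P.sum_add_sum
  rw [P.toCode_of_lt hj]
  omega

lemma unsaturatedParts_toCode : unsaturatedParts n (P.toCode n) = P.parts := by
  have hfilter : {j ∈ range n | P.toCode n j ≠ 0 ∧ P.toCode n j + j + 1 ≠ n} =
      range P.sortedParts.length := by
    ext j
    simp only [mem_filter, mem_range]
    constructor
    · rintro ⟨hjn, h0, hsat⟩
      by_contra! hj
      rw [P.toCode_of_le hj] at h0 hsat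
      split_ifs at h0 hsat <;> omega
    · intro hj
      have hlt := P.toCode_add_lt hn hj
      have hpos := P.pos_of_mem_sortedParts (List.getElem_mem hj)
      rw [← P.toCode_of_lt (n := n) hj] at hpos
      omega
  have hmap : (List.range P.sortedParts.length).map (P.toCode n) = P.sortedParts :=
    List.ext_getElem (by simp) fun j _ hj => by simp [P.toCode_of_lt hj]
  rw [unsaturatedParts, hfilter, range_val, Multiset.range, Multiset.map_coe, hmap, coe_sortedParts]

lemma saturatedParts_toCode : saturatedParts n (P.toCode n) = P.distinctParts := by
  ext m
  rw [mem_saturatedParts]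
  have hlen := P.length_sortedParts_le
  constructor
  · rintro ⟨hm, hmn, hc⟩
    by_cases hj : n - 1 - m < P.sortedParts.length
    · have := P.toCode_add_lt hn hj
      omega
    · rw [P.toCode_of_le (not_lt.1 hj), show n - 1 - (n - 1 - m) = m by omega] at hc
      split_ifs at hc with hmem
      · exact hmem
      · omega
  · intro hm
    have := P.le_of_mem_distinctParts hm
    have := P.distinctParts_pos m hm
    refine ⟨by omega, by omega, ?_⟩
    rw [P.toCode_of_le (by omega), show n - 1 - (n - 1 - m) = m by omega, if_pos hm]

lemma isAdmissibleCode_toCode : IsAdmissibleCode n k (P.toCode n) where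
  add_le j hj := by
    by_cases hjL : j < P.sortedParts.length
    · exact (P.toCode_add_lt hn hjL).le
    · rw [P.toCode_of_le (not_lt.1 hjL)]
      split_ifs <;> omega
  eq_zero j hj := by
    have := P.length_sortedParts_le
    have := P.sum_add_sum
    rw [P.toCode_of_le (by omega), if_neg fun h => (P.distinctParts_pos _ h).ne' (by omega)]
  sum_eq := by
    rw [sum_range_eq_sum_unsaturatedParts_add, P.unsaturatedParts_toCode hn,
      P.saturatedParts_toCode hn, P.sum_add_sum]
  ascent i j hij hlt := by
    by_cases hj : j < P.sortedParts.length
    · rw [P.toCode_of_lt hj, P.toCode_of_lt (hij.trans hj)] at hlt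
      exact absurd (List.pairwise_iff_getElem.1 (Multiset.pairwise_sort P.parts _) i j _ hj hij)
        hlt.not_ge
    · rw [P.toCode_of_le (not_lt.1 hj)] at hlt ⊢
      split_ifs at hlt ⊢ with hmem
      · have := P.distinctParts_pos _ hmem
        omega
      · omega

end

end

variable {k : ℕ}

def ofCode {c : ℕ → ℕ} (hc : ∑ j ∈ range n, c j = k) : PartitionPair k where
  parts := unsaturatedParts n c
  distinctParts := saturatedParts n c
  parts_pos _ := pos_of_mem_unsaturatedParts
  distinctParts_pos _ hm := (mem_saturatedParts.1 hm).1
  sum_add_sum := by rw [← sum_range_eq_sum_unsaturatedParts_add, hc]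

lemma ofCode_toCode (hn : k + 2 ≤ n) (P : PartitionPair k) :
    ofCode (P.isAdmissibleCode_toCode hn).sum_eq = P :=
  PartitionPair.ext (P.unsaturatedParts_toCode hn) (P.saturatedParts_toCode hn)

lemma toCode_ofCode {c : ℕ → ℕ} (hn : k + 2 ≤ n) (hc : IsAdmissibleCode n k c) :
    (ofCode hc.sum_eq).toCode n = c := by
  have hzero : ∃ t, c t = 0 := ⟨n, hc.eq_zero n le_rfl⟩
  set t := Nat.find hzero
  have ht : c t = 0 := Nat.find_spec hzero
  have hpos : ∀ j < t, c j ≠ 0 := fun j => Nat.find_min hzero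
  have hsorted : (ofCode hc.sum_eq).sortedParts = (List.range t).map c :=
    hc.sort_unsaturatedParts hn ht hpos
  funext j
  by_cases hj : j < t
  · rw [toCode_of_lt _ (by simpa [hsorted] using hj)]
    simp [hsorted]
  · rw [toCode_of_le _ (by simpa [hsorted] using hj)]
    change (if n - 1 - j ∈ saturatedParts n c then _ else _) = _
    split_ifs with hmem
    · obtain ⟨hj0, -, hcj⟩ := mem_saturatedParts.1 hmem
      rwa [show n - 1 - (n - 1 - j) = j by omega, eq_comm] at hcj
    · by_contra h0
      have hjn : j < n := not_le.1 fun hjn => h0 (hc.eq_zero j hjn).symm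
      have hsat := hc.ascent t j (lt_of_le_of_ne (not_lt.1 hj) fun h => h0 (h ▸ ht).symm)
        (by omega)
      exact hmem (mem_saturatedParts.2 ⟨by omega, by omega, by
        rw [show n - 1 - (n - 1 - j) = j by omega]; omega⟩)

def admissibleCodeEquiv (hn : k + 2 ≤ n) : {c // IsAdmissibleCode n k c} ≃ PartitionPair k where
  toFun c := ofCode c.2.sum_eq
  invFun P := ⟨P.toCode n, P.isAdmissibleCode_toCode hn⟩
  left_inv c := Subtype.ext (toCode_ofCode hn c.2)
  right_inv := ofCode_toCode hn

end PartitionPair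

/-- For every `k ≥ 0` and every `n ≥ k + 2`, the number of permutations of length `n`
with exactly `k` inversions avoiding both 1324 and 1342 equals `op(k)`,
the number of overpartitions of `k`. -/
theorem av_1324_1342_eq (k n : ℕ) (hn : k + 2 ≤ n) :
    Nat.card {π : Equiv.Perm (Fin n) // invCount π = k ∧
      Avoids π p1324 ∧ Avoids π p1342} = op k := by
  rw [card_avoiding_eq_card_admissibleCode, Nat.card_congr (PartitionPair.admissibleCodeEquiv hn),
    PartitionPair.card_eq_op]
end
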